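/- arXiv:1801.03737 — 7 statements merged into one kernel-verified Lean document; each statement's English description precedes it below -/
import Mathlib

section
/- For any environments μ and μ* and any m, if μ and μ* are m-counterfactually equivalent, then they are m-equivalent. -/
open scoped Classical
open Finset

/-- A POMDP without reward function ("environment"): finite sets of states, actions,
observations, a transition kernel `T`, an initial distribution `T0` and an
observation kernel `Obs`, all given as (row-)stochastic matrices of reals. -/
structure Env (S A O : Type) [Fintype S] [Fintype A] [Fintype O] where
  T : S → A → S → ℝ
  T0 : S → ℝ
  Obs : S → O → ℝ
  T_nonneg : ∀ s a s', 0 ≤ T s a s'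
  T_sum : ∀ s a, ∑ s', T s a s' = 1
  T0_nonneg : ∀ s, 0 ≤ T0 s
  T0_sum : ∑ s, T0 s = 1
  Obs_nonneg : ∀ s o, 0 ≤ Obs s o
  Obs_sum : ∀ s, ∑ o, Obs s o = 1

/-- A history `o₀a₁o₁…a_t o_t` is an initial observation together with a list of
action–observation pairs, stored in *reverse chronological order* (newest pair first). -/
abbrev Hist (A O : Type) := O × List (A × O)

/-- `HPrefix h h'` : the history `h` is an initial segment of `h'` (or equal to it). -/
def HPrefix {A O : Type} (h h' : Hist A O) : Prop := h.1 = h'.1 ∧ h.2 <:+ h'.2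

/-- A policy maps histories to probability distributions over actions. -/
structure Policy (A O : Type) [Fintype A] where
  act : Hist A O → A → ℝ
  nonneg : ∀ h a, 0 ≤ act h a
  sum_one : ∀ h, ∑ a, act h a = 1

/-- A deterministic policy: each output distribution is a point mass. -/
def Policy.IsDet {A O : Type} [Fintype A] (π : Policy A O) : Prop :=
  ∀ h, ∃ a, ∀ a', π.act h a' = if a' = a then 1 else 0

variable {S S' S'' A O : Type}

/-- Joint probability of a history together with the final state:
`histStateProb μ π o₀ l s` is the probability under `μ` and `π` of seeing the history
`(o₀, l)` and the state after the last observation being `s`. -/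
noncomputable def histStateProb [Fintype S] [Fintype A] [Fintype O]
    (μ : Env S A O) (π : Policy A O) (o0 : O) : List (A × O) → S → ℝ
  | [], s => μ.T0 s * μ.Obs s o0
  | (a, o) :: rest, s =>
      π.act (o0, rest) a * (∑ s', histStateProb μ π o0 rest s' * μ.T s' a s) * μ.Obs s o

/-- `μ(h | π)`: the probability of the history `h` under policy `π`:
`μ(o₀a₁o₁…a_t o_t | π) = ∑_{s₀…s_t} T₀(s₀)Obs(o₀|s₀)∏_k Obs(o_k|s_k)T(s_k|s_{k-1},a_k)π(a_k|…)`. -/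
noncomputable def histProb [Fintype S] [Fintype A] [Fintype O]
    (μ : Env S A O) (π : Policy A O) (h : Hist A O) : ℝ :=
  ∑ s, histStateProb μ π h.1 h.2 s

/-- `μ(h' | h, π)`: conditional probability of a history given another, via Bayes' rule;
set to `0` when `h` is not an initial segment of `h'` or the conditioning event has
probability `0`. -/
noncomputable def condProb [Fintype S] [Fintype A] [Fintype O]
    (μ : Env S A O) (π : Policy A O) (h h' : Hist A O) : ℝ :=
  if HPrefix h h' ∧ histProb μ π h ≠ 0 then histProb μ π h' / histProb μ π h else 0

/-- `m`-equivalence: all conditional probabilities of histories of length `≤ m`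
coincide, for all policies. -/
def MEquiv [Fintype S] [Fintype S'] [Fintype A] [Fintype O]
    (μ : Env S A O) (μ' : Env S' A O) (m : ℕ) : Prop :=
  ∀ (π : Policy A O) (h h' : Hist A O), h.2.length ≤ m → h'.2.length ≤ m →
    condProb μ π h h' = condProb μ' π h h'

/-- A deterministic environment policy of length `m`: a triple `(T̂₀, T̂, Ô)` with
`T̂₀ ∈ S`, `T̂ : S × A × {1,…,m} → S` (here `Fin m` with value `i` standing for turn `i+1`)
and `Ô : S × {0,…,m} → O`. -/
abbrev EnvPol (S A O : Type) (m : ℕ) := S × (S → A → Fin m → S) × (S → Fin (m + 1) → O)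

/-- `μ(π_μ) = T₀(T̂₀) ⬝ ∏_{s,a,i} T(T̂(s,a,i)|s,a) ⬝ ∏_{s,i} Obs(Ô(s,i)|s)`. -/
noncomputable def envPolProb [Fintype S] [Fintype A] [Fintype O]
    (μ : Env S A O) {m : ℕ} (ep : EnvPol S A O m) : ℝ :=
  μ.T0 ep.1 *
    ((∏ s, ∏ a, ∏ i, μ.T s a (ep.2.1 s a i)) * ∏ s, ∏ i, μ.Obs s (ep.2.2 s i))

/-- The state reached by following the environment policy `ep` along the actions of the
(reverse chronological) action–observation list: `s₀ = T̂₀`, `s_k = T̂(s_{k-1}, a_k, k)`. -/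
def epState {m : ℕ} (ep : EnvPol S A O m) : List (A × O) → S
  | [] => ep.1
  | (a, _) :: rest =>
      if h : rest.length < m then ep.2.1 (epState ep rest) a ⟨rest.length, h⟩
      else epState ep rest

/-- `μ(h | π_μ, π)`: the probability of the history `h = (o₀, l)` when the dynamics are
determined by the environment policy `ep` and the actions are drawn from `π`; it is
`∏_k π(a_k | h_{k-1})` if the observations of `h` match those generated by `ep` along the
actions of `h`, and `0` otherwise. -/
noncomputable def epHistProb {m : ℕ} [Fintype A] (ep : EnvPol S A O m) (π : Policy A O)
    (o0 : O) : List (A × O) → ℝ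
  | [] => if ep.2.2 ep.1 0 = o0 then 1 else 0
  | (a, o) :: rest =>
      epHistProb ep π o0 rest * π.act (o0, rest) a *
        (if h : rest.length < m then
          (if ep.2.2 (ep.2.1 (epState ep rest) a ⟨rest.length, h⟩)
              ⟨rest.length + 1, by omega⟩ = o then 1 else 0)
         else 0)

/-- `m`-counterfactual equivalence: for every finite collection `(h_{t_i}, π_i)` of
history–policy pairs with all `t_i ≤ m`,
`∑_{π_μ} μ(π_μ) ∏_i μ(h_{t_i}|π_μ,π_i) = ∑_{π_{μ'}} μ'(π_{μ'}) ∏_i μ'(h_{t_i}|π_{μ'},π_i)`. -/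
def MCounterEquiv [Fintype S] [DecidableEq S] [Fintype S'] [DecidableEq S']
    [Fintype A] [DecidableEq A] [Fintype O]
    (μ : Env S A O) (μ' : Env S' A O) (m : ℕ) : Prop :=
  ∀ (n : ℕ) (hs : Fin n → Hist A O) (πs : Fin n → Policy A O),
    (∀ i, (hs i).2.length ≤ m) →
    (∑ ep : EnvPol S A O m, envPolProb μ ep * ∏ i, epHistProb ep (πs i) (hs i).1 (hs i).2)
      = ∑ ep : EnvPol S' A O m, envPolProb μ' ep * ∏ i, epHistProb ep (πs i) (hs i).1 (hs i).2

/-- A deterministic environment: every transition and observation distribution is a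
point mass. -/
def IsDetEnv [Fintype S] [Fintype A] [Fintype O] (μ : Env S A O) : Prop :=
  (∀ s a, ∃ s', ∀ s'', μ.T s a s'' = if s'' = s' then 1 else 0) ∧
  (∀ s, ∃ o, ∀ o', μ.Obs s o' = if o' = o then 1 else 0)

/-- `μ(h | s₀ = s, π)` (probability of the history conditional on the initial state),
with the final state summed out below. -/
noncomputable def histStateProbFrom [Fintype S] [Fintype A] [Fintype O]
    (μ : Env S A O) (π : Policy A O) (s0 : S) (o0 : O) : List (A × O) → S → ℝ
  | [], s => (if s = s0 then 1 else 0) * μ.Obs s o0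
  | (a, o) :: rest, s =>
      π.act (o0, rest) a *
        (∑ s', histStateProbFrom μ π s0 o0 rest s' * μ.T s' a s) * μ.Obs s o

/-- `μ(h | s₀ = s, π)`. -/
noncomputable def histProbFrom [Fintype S] [Fintype A] [Fintype O]
    (μ : Env S A O) (π : Policy A O) (s0 : S) (h : Hist A O) : ℝ :=
  ∑ s, histStateProbFrom μ π s0 h.1 h.2 s

/-- The posterior `μ(s₀ = s | h)` over the initial state given a history, computed by
Bayes' rule from any policy `π` with `μ(h|π) > 0` (it is independent of the choice of
such a policy), and set to `0` if no such policy exists. -/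
noncomputable def posterior [Fintype S] [Fintype A] [Fintype O]
    (μ : Env S A O) (h : Hist A O) (s : S) : ℝ :=
  if hex : ∃ π : Policy A O, 0 < histProb μ π h then
    μ.T0 s * histProbFrom μ hex.choose s h /
      ∑ s', μ.T0 s' * histProbFrom μ hex.choose s' h
  else 0

/-- Given `m`, a pure learning process on `μ` is a map `P` from histories of length `≤ m`
to `[0,1]` realized, on some deterministic environment `μ'` that is `m`-counterfactually
equivalent to `μ`, as `P(h) = ∑_{s'} p_{s'} μ'(s₀ = s' | h)` for constants `p_{s'} ∈ [0,1]`. -/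
def IsPureLearning [Fintype S] [DecidableEq S] [Fintype A] [DecidableEq A] [Fintype O]
    (μ : Env S A O) (m : ℕ) (P : Hist A O → ℝ) : Prop :=
  (∀ h : Hist A O, h.2.length ≤ m → P h ∈ Set.Icc (0 : ℝ) 1) ∧
  ∃ (S' : Type) (_ : Fintype S') (_ : DecidableEq S') (μ' : Env S' A O) (p : S' → ℝ),
    IsDetEnv μ' ∧ MCounterEquiv μ μ' m ∧ (∀ s', p s' ∈ Set.Icc (0 : ℝ) 1) ∧
    ∀ h : Hist A O, h.2.length ≤ m → P h = ∑ s', p s' * posterior μ' h s'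

/-- First components: the history (in reverse chronological order) generated after `t`
turns in a deterministic environment given by functions `(Td, Od)`, starting from state
`s0` and following the deterministic policy `p`; second component: the state reached. -/
def genHistAux (Td : S → A → S) (Od : S → O) (p : Hist A O → A) (s0 : S) :
    ℕ → List (A × O) × S
  | 0 => ([], s0)
  | t + 1 =>
      let r := genHistAux Td Od p s0 t
      let a := p (Od s0, r.1)
      let s' := Td r.2 a
      ((a, Od s') :: r.1, s')

/-- `f_{s0}(p)` truncated at length `t`: the unique history of length `t` generated from
the initial state `s0` by the deterministic policy `p` in the deterministic environment
given by the functions `(Td, Od)`. -/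
def genHist (Td : S → A → S) (Od : S → O) (p : Hist A O → A) (s0 : S) (t : ℕ) :
    Hist A O :=
  (Od s0, (genHistAux Td Od p s0 t).1)

/-- The fiber `F(f_s)` (for `s` a state of the deterministic environment `(Td', Od')`):
all initial states `s0` of the deterministic environment `(Td, Od)` whose generated-history
map `f_{s0} : Π₀ → H_m` equals `f_s`. -/
noncomputable def fiber [Fintype S] (Td : S → A → S) (Od : S → O)
    (Td' : S' → A → S') (Od' : S' → O) (m : ℕ) (s : S') : Finset S :=
  Finset.univ.filter fun s0 => ∀ p : Hist A O → A, genHist Td Od p s0 m = genHist Td' Od' p s m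

/-! Under `μ(π_μ)` the entries `T̂₀`, `T̂(s,a,i)` and `Ô(s,i)` of a deterministic environment
policy are independent, distributed as `T₀`, `T(·|s,a)` and `Obs(·|s)`. A history of length
`t ≤ m` reads, along its state path, one transition entry at each time `< t` and one observation
entry at each time `≤ t`, and these are fresh when read. Summing `μ(π_μ) μ(h | π_μ, π)` over
`π_μ` therefore reproduces the forward recursion for `μ(h | π)`. The case `n = 1` of
counterfactual equivalence then says that `μ` and `μ*` give every history of length `≤ m` the
same probability, and conditional probabilities are quotients of these. -/

section ProductWeight

variable {ι κ : Type*} [Fintype ι] [DecidableEq ι] [Fintype κ]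

theorem sum_prod_apply_eq_one (p : ι → κ → ℝ) (hp : ∀ i, ∑ x, p i x = 1) :
    ∑ g : ι → κ, ∏ i, p i (g i) = 1 := by
  rw [← Fintype.prod_sum]
  simp [hp]

theorem sum_prod_mul_eq_sum_prod_mul_sum_update (p : ι → κ → ℝ) (i₀ : ι)
    (hp : ∑ x, p i₀ x = 1) (H : (ι → κ) → ℝ) :
    ∑ g : ι → κ, (∏ i, p i (g i)) * H g
      = ∑ g : ι → κ, (∏ i, p i (g i)) * ∑ x, p i₀ x * H (Function.update g i₀ x) := by
  -- `(g, x) ↦ (g[i₀ ↦ x], g i₀)` is an involution exchanging the two weights in `hweight`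
  let swap : Function.Involutive fun q : (ι → κ) × κ => (Function.update q.1 i₀ q.2, q.1 i₀) :=
    fun q => by simp
  have hweight : ∀ g x, (∏ i, p i (Function.update g i₀ x i)) * p i₀ (g i₀)
      = (∏ i, p i (g i)) * p i₀ x := by
    intro g x
    rw [Fintype.prod_eq_mul_prod_compl i₀, Fintype.prod_eq_mul_prod_compl i₀ (fun i => p i (g i))]
    simp only [Function.update_self]
    rw [Finset.prod_congr rfl fun j hj => by rw [Function.update_of_ne (by simpa using hj)]]
    ring
  calc ∑ g : ι → κ, (∏ i, p i (g i)) * H g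
      = ∑ q : (ι → κ) × κ, (∏ i, p i (Function.update q.1 i₀ q.2 i)) * p i₀ (q.1 i₀) *
          H (Function.update q.1 i₀ q.2) := by
        rw [← Equiv.sum_comp swap.toPerm]
        simp [Fintype.sum_prod_type, ← Finset.sum_mul, ← Finset.mul_sum, hp]
    _ = _ := by
        simp only [hweight, Fintype.sum_prod_type, Finset.mul_sum]
        exact Finset.sum_congr rfl fun g _ => Finset.sum_congr rfl fun x _ => by ring

theorem sum_prod_mul_mul_apply (p : ι → κ → ℝ) (i₀ : ι) (hp : ∑ x, p i₀ x = 1)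
    (F : (ι → κ) → ℝ) (hF : ∀ g x, F (Function.update g i₀ x) = F g) (φ : κ → ℝ) :
    ∑ g : ι → κ, (∏ i, p i (g i)) * (F g * φ (g i₀))
      = (∑ g : ι → κ, (∏ i, p i (g i)) * F g) * ∑ x, p i₀ x * φ x := by
  rw [sum_prod_mul_eq_sum_prod_mul_sum_update p i₀ hp, Finset.sum_mul]
  refine Finset.sum_congr rfl fun g _ => ?_
  simp only [hF, Function.update_self, Finset.mul_sum]
  exact Finset.sum_congr rfl fun x _ => by ring

end ProductWeight

section Curried

variable {X Y Z W : Type*} [Fintype X] [Fintype Y] [Fintype Z] [Fintype W]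
  [DecidableEq X] [DecidableEq Y] [DecidableEq Z]

theorem sum_prod₂_mul_mul_apply (p : X → Y → W → ℝ) (x₀ : X) (y₀ : Y)
    (hp : ∑ w, p x₀ y₀ w = 1) (F : (X → Y → W) → ℝ)
    (hF : ∀ t w, F (fun x y => if (x, y) = (x₀, y₀) then w else t x y) = F t) (φ : W → ℝ) :
    ∑ t : X → Y → W, (∏ x, ∏ y, p x y (t x y)) * (F t * φ (t x₀ y₀))
      = (∑ t : X → Y → W, (∏ x, ∏ y, p x y (t x y)) * F t) * ∑ w, p x₀ y₀ w * φ w := by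
  have := sum_prod_mul_mul_apply (fun q : X × Y => p q.1 q.2) (x₀, y₀) hp
    (fun G => F (Function.curry G)) (fun G w => by
      convert hF (Function.curry G) w using 2
      ext x y; simp [Function.update_apply]) φ
  simp only [Fintype.prod_prod_type] at this
  rw [← (Equiv.curry X Y W).sum_comp, ← (Equiv.curry X Y W).sum_comp]
  simpa only [Equiv.curry_apply, Function.curry_apply] using this

theorem sum_prod₃_mul_mul_apply (p : X → Y → Z → W → ℝ) (x₀ : X) (y₀ : Y) (z₀ : Z)
    (hp : ∑ w, p x₀ y₀ z₀ w = 1) (F : (X → Y → Z → W) → ℝ)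
    (hF : ∀ t w, F (fun x y z => if (x, y, z) = (x₀, y₀, z₀) then w else t x y z) = F t)
    (φ : W → ℝ) :
    ∑ t : X → Y → Z → W, (∏ x, ∏ y, ∏ z, p x y z (t x y z)) * (F t * φ (t x₀ y₀ z₀))
      = (∑ t : X → Y → Z → W, (∏ x, ∏ y, ∏ z, p x y z (t x y z)) * F t) *
          ∑ w, p x₀ y₀ z₀ w * φ w := by
  have := sum_prod₂_mul_mul_apply (fun x (q : Y × Z) => p x q.1 q.2) x₀ (y₀, z₀) hp
    (fun G => F fun x => Function.curry (G x)) (fun G w => by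
      convert hF (fun x => Function.curry (G x)) w using 2
      ext x y z; simp) φ
  simp only [Fintype.prod_prod_type] at this
  let e : (X → Y × Z → W) ≃ (X → Y → Z → W) :=
    ⟨fun G x => Function.curry (G x), fun t x => Function.uncurry (t x), fun _ => rfl, fun _ => rfl⟩
  rw [← e.sum_comp, ← e.sum_comp]
  exact this

end Curried

namespace EnvPol

variable {m : ℕ}

/-- `ep` and `ep'` agree on every entry that is read while generating a history of length `k`. -/
def AgreeUpTo (k : ℕ) (ep ep' : EnvPol S A O m) : Prop :=
  ep.1 = ep'.1 ∧ (∀ s a (i : Fin m), (i : ℕ) < k → ep.2.1 s a i = ep'.2.1 s a i) ∧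
    ∀ s (i : Fin (m + 1)), (i : ℕ) ≤ k → ep.2.2 s i = ep'.2.2 s i

theorem AgreeUpTo.mono {k k' : ℕ} {ep ep' : EnvPol S A O m} (h : AgreeUpTo k ep ep')
    (hk : k' ≤ k) : AgreeUpTo k' ep ep' :=
  ⟨h.1, fun s a i hi => h.2.1 s a i (by omega), fun s i hi => h.2.2 s i (by omega)⟩

def updateTransition [DecidableEq S] [DecidableEq A] (ep : EnvPol S A O m) (s₀ : S) (a₀ : A)
    (i₀ : Fin m) (x : S) : EnvPol S A O m :=
  (ep.1, fun s a i => if (s, a, i) = (s₀, a₀, i₀) then x else ep.2.1 s a i, ep.2.2)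

def updateObservation [DecidableEq S] (ep : EnvPol S A O m) (s₀ : S) (i₀ : Fin (m + 1))
    (o : O) : EnvPol S A O m :=
  (ep.1, ep.2.1, fun s i => if (s, i) = (s₀, i₀) then o else ep.2.2 s i)

theorem agreeUpTo_updateTransition [DecidableEq S] [DecidableEq A] {k : ℕ}
    (ep : EnvPol S A O m) (s₀ : S) (a₀ : A) (i₀ : Fin m) (hi : k ≤ i₀) (x : S) :
    AgreeUpTo k (ep.updateTransition s₀ a₀ i₀ x) ep :=
  ⟨rfl, fun s a i hi' => if_neg (by grind), fun _ _ _ => rfl⟩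

theorem agreeUpTo_updateObservation [DecidableEq S] {k : ℕ} (ep : EnvPol S A O m) (s₀ : S)
    (i₀ : Fin (m + 1)) (hi : k < i₀) (o : O) :
    AgreeUpTo k (ep.updateObservation s₀ i₀ o) ep :=
  ⟨rfl, fun _ _ _ _ => rfl, fun s i hi' => if_neg (by grind)⟩

end EnvPol

open EnvPol

theorem epState_eq_of_agreeUpTo {m : ℕ} {ep ep' : EnvPol S A O m} :
    ∀ {l : List (A × O)}, AgreeUpTo l.length ep ep' → epState ep l = epState ep' l
  | [], h => h.1
  | (a, o) :: rest, h => by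
    have ih := epState_eq_of_agreeUpTo (h.mono (Nat.le_succ _))
    simp only [epState, ih]
    split_ifs with hk
    · exact h.2.1 _ _ ⟨rest.length, hk⟩ (by simp)
    · rfl

theorem epHistProb_eq_of_agreeUpTo [Fintype A] {m : ℕ} {ep ep' : EnvPol S A O m}
    (π : Policy A O) (o0 : O) :
    ∀ {l : List (A × O)}, AgreeUpTo l.length ep ep' →
      epHistProb ep π o0 l = epHistProb ep' π o0 l
  | [], h => by simp only [epHistProb, h.1, h.2.2 _ 0 (Nat.zero_le _)]
  | (a, o) :: rest, h => by
    have h' := h.mono (Nat.le_succ _)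
    simp only [epHistProb, epHistProb_eq_of_agreeUpTo π o0 h', epState_eq_of_agreeUpTo h']
    by_cases hk : rest.length < m
    · rw [dif_pos hk, dif_pos hk, h.2.1 _ _ ⟨rest.length, hk⟩ (by simp),
        h.2.2 _ ⟨rest.length + 1, by omega⟩ (by simp)]
    · rw [dif_neg hk, dif_neg hk]

theorem epHistProb_cons_mul_epState_cons [Fintype S] [DecidableEq S] [Fintype A] {m : ℕ}
    (ep : EnvPol S A O m) (π : Policy A O) (o0 : O) (a : A) (o : O) (rest : List (A × O))
    (hk : rest.length < m) (s : S) :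
    epHistProb ep π o0 ((a, o) :: rest) * (if epState ep ((a, o) :: rest) = s then 1 else 0)
      = π.act (o0, rest) a * ∑ s', (epHistProb ep π o0 rest *
          (if epState ep rest = s' then 1 else 0) *
            (if ep.2.1 s' a ⟨rest.length, hk⟩ = s then 1 else 0)) *
              if ep.2.2 s ⟨rest.length + 1, by omega⟩ = o then 1 else 0 := by
  simp only [mul_assoc, ← Finset.mul_sum]
  rw [Finset.sum_eq_single (epState ep rest) (fun b _ hb => by simp [Ne.symm hb]) (by simp)]
  simp only [epHistProb, epState, dif_pos hk, if_true, one_mul]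
  by_cases h : ep.2.1 (epState ep rest) a ⟨rest.length, hk⟩ = s
  · simp only [h, if_true]
    ring
  · simp [h]

section Marginal

variable [Fintype S] [DecidableEq S] [Fintype A] [DecidableEq A] [Fintype O] {m : ℕ}

theorem sum_envPolProb_mul (μ : Env S A O) (F : EnvPol S A O m → ℝ) :
    ∑ ep : EnvPol S A O m, envPolProb μ ep * F ep
      = ∑ s0, μ.T0 s0 * ∑ t : S → A → Fin m → S, (∏ s, ∏ a, ∏ i, μ.T s a (t s a i)) *
          ∑ g : S → Fin (m + 1) → O, (∏ s, ∏ i, μ.Obs s (g s i)) * F (s0, t, g) := by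
  simp only [Fintype.sum_prod_type, envPolProb, Finset.mul_sum, mul_assoc]

theorem sum_envPolProb_mul_apply_fst (μ : Env S A O) (φ : S → ℝ) :
    ∑ ep : EnvPol S A O m, envPolProb μ ep * φ ep.1 = ∑ s, μ.T0 s * φ s := by
  have hT : ∑ t : S → A → Fin m → S, ∏ s, ∏ a, ∏ i, μ.T s a (t s a i) = 1 :=
    sum_prod_apply_eq_one _ fun s => sum_prod_apply_eq_one _ fun a =>
      sum_prod_apply_eq_one _ fun _ => μ.T_sum s a
  have hObs : ∑ g : S → Fin (m + 1) → O, ∏ s, ∏ i, μ.Obs s (g s i) = 1 :=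
    sum_prod_apply_eq_one _ fun s => sum_prod_apply_eq_one _ fun _ => μ.Obs_sum s
  simp only [sum_envPolProb_mul, ← Finset.sum_mul, hObs, hT, one_mul, mul_comm (μ.T0 _)]

theorem sum_envPolProb_mul_mul_transition (μ : Env S A O) (s₀ : S) (a₀ : A) (i₀ : Fin m)
    {F : EnvPol S A O m → ℝ} (hF : ∀ ep x, F (ep.updateTransition s₀ a₀ i₀ x) = F ep) (φ : S → ℝ) :
    ∑ ep : EnvPol S A O m, envPolProb μ ep * (F ep * φ (ep.2.1 s₀ a₀ i₀))
      = (∑ ep : EnvPol S A O m, envPolProb μ ep * F ep) * ∑ x, μ.T s₀ a₀ x * φ x := by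
  rw [sum_envPolProb_mul, sum_envPolProb_mul, Finset.sum_mul]
  refine Finset.sum_congr rfl fun s0 _ => ?_
  simp only [← mul_assoc (∏ s, ∏ i, μ.Obs s _), ← Finset.sum_mul]
  rw [mul_assoc]
  congr 1
  exact sum_prod₃_mul_mul_apply (fun s a _ => μ.T s a) s₀ a₀ i₀ (μ.T_sum s₀ a₀) _
    (fun t x => Finset.sum_congr rfl fun g _ => by rw [← hF (s0, t, g) x]; rfl) φ

theorem sum_envPolProb_mul_mul_observation (μ : Env S A O) (s₀ : S) (i₀ : Fin (m + 1))
    {F : EnvPol S A O m → ℝ} (hF : ∀ ep o, F (ep.updateObservation s₀ i₀ o) = F ep) (φ : O → ℝ) :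
    ∑ ep : EnvPol S A O m, envPolProb μ ep * (F ep * φ (ep.2.2 s₀ i₀))
      = (∑ ep : EnvPol S A O m, envPolProb μ ep * F ep) * ∑ o, μ.Obs s₀ o * φ o := by
  rw [sum_envPolProb_mul, sum_envPolProb_mul, Finset.sum_mul]
  refine Finset.sum_congr rfl fun s0 _ => ?_
  rw [mul_assoc, Finset.sum_mul]
  congr 1
  refine Finset.sum_congr rfl fun t _ => ?_
  rw [mul_assoc]
  congr 1
  exact sum_prod₂_mul_mul_apply (fun s _ => μ.Obs s) s₀ i₀ (μ.Obs_sum s₀) _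
    (fun g o => hF (s0, t, g) o) φ

/-- The entries `T̂(s', a, t)` and `Ô(s, t + 1)` are not read by a history `rest` of length `t`,
so they factor out with their laws `T(·|s', a)` and `Obs(·|s)`. -/
theorem sum_envPolProb_mul_epHistProb_mul_step (μ : Env S A O) (π : Policy A O) (o0 : O)
    (a : A) (o : O) (rest : List (A × O)) (hk : rest.length < m) (s' s : S) :
    ∑ ep : EnvPol S A O m, envPolProb μ ep *
        ((epHistProb ep π o0 rest * (if epState ep rest = s' then 1 else 0) *
          (if ep.2.1 s' a ⟨rest.length, hk⟩ = s then 1 else 0)) *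
            if ep.2.2 s ⟨rest.length + 1, by omega⟩ = o then 1 else 0)
      = (∑ ep : EnvPol S A O m, envPolProb μ ep *
          (epHistProb ep π o0 rest * if epState ep rest = s' then 1 else 0)) *
            μ.T s' a s * μ.Obs s o := by
  rw [sum_envPolProb_mul_mul_observation μ s _
      (fun ep x => by
        have h := agreeUpTo_updateObservation ep s ⟨rest.length + 1, by omega⟩
          (Nat.lt_succ_self _) x
        rw [epHistProb_eq_of_agreeUpTo π o0 h, epState_eq_of_agreeUpTo h]
        rfl)
      fun x => if x = o then 1 else 0,
    sum_envPolProb_mul_mul_transition μ s' a _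
      (fun ep x => by
        have h := agreeUpTo_updateTransition ep s' a ⟨rest.length, hk⟩ le_rfl x
        rw [epHistProb_eq_of_agreeUpTo π o0 h, epState_eq_of_agreeUpTo h])
      fun x => if x = s then 1 else 0]
  simp

theorem sum_envPolProb_mul_epHistProb_mul_epState (μ : Env S A O) (π : Policy A O) (o0 : O) :
    ∀ (l : List (A × O)), l.length ≤ m → ∀ s,
      ∑ ep : EnvPol S A O m, envPolProb μ ep *
        (epHistProb ep π o0 l * if epState ep l = s then 1 else 0) = histStateProb μ π o0 l s
  | [], _, s => by
    calc _ = ∑ ep : EnvPol S A O m, envPolProb μ ep *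
            ((if ep.1 = s then 1 else 0) * if ep.2.2 s 0 = o0 then 1 else 0) := by
          refine Finset.sum_congr rfl fun ep _ => ?_
          by_cases h : ep.1 = s
          · simp [epHistProb, epState, h]
          · simp [epState, h]
      _ = μ.T0 s * μ.Obs s o0 := by
          rw [sum_envPolProb_mul_mul_observation μ s 0 (fun _ _ => rfl)
              fun o => if o = o0 then 1 else 0,
            sum_envPolProb_mul_apply_fst μ fun x => if x = s then 1 else 0]
          simp
  | (a, o) :: rest, hl, s => by
    have hk : rest.length < m := by simp at hl; omega
    calc _ = π.act (o0, rest) a * ∑ s', ∑ ep : EnvPol S A O m, envPolProb μ ep *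
            ((epHistProb ep π o0 rest * (if epState ep rest = s' then 1 else 0) *
              (if ep.2.1 s' a ⟨rest.length, hk⟩ = s then 1 else 0)) *
                if ep.2.2 s ⟨rest.length + 1, by omega⟩ = o then 1 else 0) := by
          simp only [epHistProb_cons_mul_epState_cons _ π o0 a o rest hk, Finset.mul_sum]
          rw [Finset.sum_comm]
          exact Finset.sum_congr rfl fun s' _ => Finset.sum_congr rfl fun ep _ => by ring
      _ = histStateProb μ π o0 ((a, o) :: rest) s := by
          simp only [sum_envPolProb_mul_epHistProb_mul_step μ π o0 a o rest hk,
            sum_envPolProb_mul_epHistProb_mul_epState μ π o0 rest hk.le, histStateProb,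
            Finset.mul_sum, Finset.sum_mul]
          exact Finset.sum_congr rfl fun s' _ => by ring

theorem sum_envPolProb_mul_epHistProb (μ : Env S A O) (π : Policy A O) {h : Hist A O}
    (hl : h.2.length ≤ m) :
    ∑ ep : EnvPol S A O m, envPolProb μ ep * epHistProb ep π h.1 h.2 = histProb μ π h := by
  simp only [histProb, ← sum_envPolProb_mul_epHistProb_mul_epState μ π h.1 h.2 hl]
  rw [Finset.sum_comm]
  simp

end Marginal

theorem histProb_eq_of_mCounterEquiv [Fintype S] [DecidableEq S] [Fintype S'] [DecidableEq S']
    [Fintype A] [DecidableEq A] [Fintype O] {μ : Env S A O} {μ' : Env S' A O} {m : ℕ}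
    (hce : MCounterEquiv μ μ' m) (π : Policy A O) {h : Hist A O} (hl : h.2.length ≤ m) :
    histProb μ π h = histProb μ' π h := by
  have h1 := hce 1 (fun _ => h) (fun _ => π) (fun _ => hl)
  simp only [Fin.prod_univ_one] at h1
  rwa [sum_envPolProb_mul_epHistProb μ π hl, sum_envPolProb_mul_epHistProb μ' π hl] at h1

/-- If the environments `μ` and `μ'` are `m`-counterfactually
equivalent, then they are `m`-equivalent. -/
theorem counterfactual_equiv_implies_equiv
    {S S' A O : Type} [Fintype S] [DecidableEq S] [Fintype S'] [DecidableEq S']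
    [Fintype A] [DecidableEq A] [Fintype O]
    (μ : Env S A O) (μ' : Env S' A O) (m : ℕ)
    (hce : MCounterEquiv μ μ' m) : MEquiv μ μ' m := by
  intro π h h' hl hl'
  simp only [condProb, histProb_eq_of_mCounterEquiv hce π hl,
    histProb_eq_of_mCounterEquiv hce π hl']
end

section
/- For every m and every environment μ, there exists an environment μ* that is m-counterfactually equivalent to μ and whose transition kernel T* and observation kernel Obs* are both deterministic (point masses), so that all stochasticity of μ* resides in its initial distribution T₀*. -/
open scoped Classical
open Finset

variable {S S' S'' A O : Type}

/-!
Let the new environment carry a deterministic environment policy `π_μ` of `μ` in its state,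
together with the current state `s` of `μ` and a clock `k`. The state moves deterministically
by `π_μ`, from `(π_μ, s, k)` to `(π_μ, T̂(s, a, k+1), k+1)`, and emits `Ô(s, k)`. All the
randomness goes into the initial distribution, which draws `π_μ` with probability `μ(π_μ)` and
starts at `(π_μ, T̂₀, 0)`. In a deterministic environment the only environment policy of
positive probability from a given initial state is the one that follows the dynamics, and
from `(π_μ, T̂₀, 0)` this policy generates the same histories as `π_μ`. So both sides of
counterfactual equivalence are the same average over `π_μ`.
-/

lemma sum_pi_prod_eq_one {ι β : Type*} [Fintype ι] [DecidableEq ι] [Fintype β]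
    (g : ι → β → ℝ) (hg : ∀ i, ∑ b, g i b = 1) : ∑ f : ι → β, ∏ i, g i (f i) = 1 := by
  rw [← Fintype.prod_sum]
  simp [hg]

section

variable {S A O : Type}

lemma envPolProb_nonneg [Fintype S] [Fintype A] [Fintype O] (μ : Env S A O) {m : ℕ}
    (ep : EnvPol S A O m) : 0 ≤ envPolProb μ ep :=
  mul_nonneg (μ.T0_nonneg _) <| mul_nonneg
    (prod_nonneg fun _ _ => prod_nonneg fun _ _ => prod_nonneg fun _ _ => μ.T_nonneg _ _ _)
    (prod_nonneg fun _ _ => prod_nonneg fun _ _ => μ.Obs_nonneg _ _)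

lemma sum_envPolProb [Fintype S] [DecidableEq S] [Fintype A] [DecidableEq A] [Fintype O]
    (μ : Env S A O) (m : ℕ) : ∑ ep : EnvPol S A O m, envPolProb μ ep = 1 := by
  have hT : ∑ f : S → A → Fin m → S, ∏ s, ∏ a, ∏ i, μ.T s a (f s a i) = 1 :=
    sum_pi_prod_eq_one (fun s (φ : A → Fin m → S) => ∏ a, ∏ i, μ.T s a (φ a i)) fun s =>
      sum_pi_prod_eq_one (fun a (ψ : Fin m → S) => ∏ i, μ.T s a (ψ i)) fun a =>
        sum_pi_prod_eq_one (fun (_ : Fin m) => μ.T s a) fun _ => μ.T_sum s a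
  have hO : ∑ g : S → Fin (m + 1) → O, ∏ s, ∏ i, μ.Obs s (g s i) = 1 :=
    sum_pi_prod_eq_one (fun s (ψ : Fin (m + 1) → O) => ∏ i, μ.Obs s (ψ i)) fun s =>
      sum_pi_prod_eq_one (fun (_ : Fin (m + 1)) => μ.Obs s) fun _ => μ.Obs_sum s
  simp only [envPolProb, Fintype.sum_prod_type, ← mul_sum, hT, hO, mul_one, μ.T0_sum]

noncomputable def Env.ofDet [Fintype S] [Fintype A] [Fintype O] (p : S → ℝ)
    (hp0 : ∀ s, 0 ≤ p s) (hp1 : ∑ s, p s = 1) (step : S → A → S) (obs : S → O) : Env S A O where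
  T s a s' := if s' = step s a then 1 else 0
  T0 := p
  Obs s o := if o = obs s then 1 else 0
  T_nonneg _ _ _ := by split <;> norm_num
  T_sum _ _ := by simp
  T0_nonneg := hp0
  T0_sum := hp1
  Obs_nonneg _ _ := by split <;> norm_num
  Obs_sum _ := by simp

def EnvPol.ofDet {m : ℕ} (s0 : S) (step : S → A → S) (obs : S → O) : EnvPol S A O m :=
  (s0, fun s a _ => step s a, fun s _ => obs s)

section OfDet

variable [Fintype S] [Fintype A] [Fintype O] {p : S → ℝ} {hp0 : ∀ s, 0 ≤ p s}
  {hp1 : ∑ s, p s = 1} {step : S → A → S} {obs : S → O}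

lemma isDetEnv_ofDet : IsDetEnv (Env.ofDet p hp0 hp1 step obs) :=
  ⟨fun s a => ⟨step s a, fun _ => rfl⟩, fun s => ⟨obs s, fun _ => rfl⟩⟩

lemma envPolProb_ofDet {m : ℕ} (ep : EnvPol S A O m) :
    envPolProb (Env.ofDet p hp0 hp1 step obs) ep =
      if ep = EnvPol.ofDet ep.1 step obs then p ep.1 else 0 := by
  simp [envPolProb, Env.ofDet, EnvPol.ofDet, prod_boole, Prod.ext_iff, funext_iff,
    ← ite_and, and_comm]

lemma sum_envPolProb_ofDet_mul [DecidableEq S] [DecidableEq A] {m : ℕ}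
    (F : EnvPol S A O m → ℝ) :
    ∑ ep, envPolProb (Env.ofDet p hp0 hp1 step obs) ep * F ep =
      ∑ s, p s * F (EnvPol.ofDet s step obs) := by
  rw [Fintype.sum_prod_type]
  simp [envPolProb_ofDet, EnvPol.ofDet]

end OfDet

-- The clock is needed because an environment policy depends on the turn.
abbrev DerandState (S A O : Type) (m : ℕ) := EnvPol S A O m × S × Fin (m + 1)

def derandStep {m : ℕ} (x : DerandState S A O m) (a : A) : DerandState S A O m :=
  if h : (x.2.2 : ℕ) < m then (x.1, x.1.2.1 x.2.1 a ⟨x.2.2, h⟩, ⟨x.2.2 + 1, by omega⟩) else x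

def derandObs {m : ℕ} (x : DerandState S A O m) : O := x.1.2.2 x.2.1 x.2.2

noncomputable def derandInit [Fintype S] [Fintype A] [Fintype O] (μ : Env S A O) {m : ℕ}
    (x : DerandState S A O m) : ℝ :=
  if x.2 = (x.1.1, 0) then envPolProb μ x.1 else 0

lemma derandInit_nonneg [Fintype S] [Fintype A] [Fintype O] (μ : Env S A O) {m : ℕ}
    (x : DerandState S A O m) : 0 ≤ derandInit μ x := by
  unfold derandInit
  split
  · exact envPolProb_nonneg μ x.1
  · rfl

lemma sum_derandInit_mul [Fintype S] [DecidableEq S] [Fintype A] [DecidableEq A] [Fintype O]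
    (μ : Env S A O) {m : ℕ} (F : DerandState S A O m → ℝ) :
    ∑ x, derandInit μ x * F x = ∑ ep, envPolProb μ ep * F (ep, ep.1, 0) := by
  rw [Fintype.sum_prod_type]
  simp [derandInit]

lemma sum_derandInit [Fintype S] [DecidableEq S] [Fintype A] [DecidableEq A] [Fintype O]
    (μ : Env S A O) (m : ℕ) : ∑ x : DerandState S A O m, derandInit μ x = 1 := by
  simpa [sum_envPolProb] using sum_derandInit_mul μ (m := m) 1

noncomputable def Env.derandomize [Fintype S] [DecidableEq S] [Fintype A] [DecidableEq A]
    [Fintype O] (μ : Env S A O) (m : ℕ) : Env (DerandState S A O m) A O :=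
  Env.ofDet (derandInit μ) (derandInit_nonneg μ) (sum_derandInit μ m) derandStep derandObs

lemma epState_ofDet_derand {m : ℕ} (ep : EnvPol S A O m) {l : List (A × O)}
    (hl : l.length ≤ m) :
    epState (EnvPol.ofDet (m := m) (ep, ep.1, 0) derandStep derandObs) l =
      (ep, epState ep l, ⟨l.length, by omega⟩) := by
  induction l with
  | nil => rfl
  | cons ao rest ih =>
    have hr : rest.length < m := by simpa using hl
    simp only [epState, dif_pos hr, ih hr.le]
    simp [EnvPol.ofDet, derandStep, hr]

lemma epHistProb_ofDet_derand [Fintype A] {m : ℕ} (ep : EnvPol S A O m) (π : Policy A O)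
    (o0 : O) {l : List (A × O)} (hl : l.length ≤ m) :
    epHistProb (EnvPol.ofDet (m := m) (ep, ep.1, 0) derandStep derandObs) π o0 l =
      epHistProb ep π o0 l := by
  induction l with
  | nil => rfl
  | cons ao rest ih =>
    have hr : rest.length < m := by simpa using hl
    simp only [epHistProb, dif_pos hr, ih hr.le, epState_ofDet_derand ep hr.le]
    simp [EnvPol.ofDet, derandStep, derandObs, hr]

theorem mCounterEquiv_derandomize [Fintype S] [DecidableEq S] [Fintype A] [DecidableEq A]
    [Fintype O] (μ : Env S A O) (m : ℕ) : MCounterEquiv μ (μ.derandomize m) m := by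
  intro n hs πs hlen
  rw [Env.derandomize, sum_envPolProb_ofDet_mul, sum_derandInit_mul]
  simp only [epHistProb_ofDet_derand _ _ _ (hlen _)]

end

/-- For every `m` and every environment `μ`, there exists an environment
`μ'` that is `m`-counterfactually equivalent to `μ` and whose transition and observation
kernels are both deterministic (point masses), so that all stochasticity of `μ'` resides
in its initial distribution. -/
theorem exists_deterministic_counterfactually_equivalent
    {S A O : Type} [Fintype S] [DecidableEq S] [Fintype A] [DecidableEq A] [Fintype O]
    (m : ℕ) (μ : Env S A O) :
    ∃ (S' : Type) (_ : Fintype S') (_ : DecidableEq S') (μ' : Env S' A O),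
      IsDetEnv μ' ∧ MCounterEquiv μ μ' m :=
  ⟨DerandState S A O m, inferInstance, inferInstance, μ.derandomize m, isDetEnv_ofDet,
    mCounterEquiv_derandomize μ m⟩
end

section
/- Fix m and an environment μ. If P is a pure learning process on μ, and μ* is any deterministic environment that is m-counterfactually equivalent to μ, then there exist constants p_{s*} ∈ [0,1] for s* ∈ S* such that P(h_t) = ∑_{s*∈S*} p_{s*} μ*(s₀ = s* | h_t) for all histories h_t of length t ≤ m. In other words, every deterministic m-counterfactually equivalent environment realizes every pure learning process. -/
open scoped Classical
open Finset

variable {S S' S'' A O : Type}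

/-!
In a deterministic environment the posterior over initial states sees a state only through
its *behaviour*: the observations it produces under each open-loop action sequence of length
`m`. A state has a given behaviour iff it is consistent with the finitely many histories that
behaviour generates, so counterfactual equivalence, applied to that family under the uniform
policy, shows that two `m`-counterfactually equivalent deterministic environments push their
initial distributions forward to the same law on behaviours. The weights of a pure learning
process then transfer fiberwise: each state of `μ*` gets the `T₀`-average of `p'` over the
states of `μ'` with the same behaviour.
-/

section FiberSums

variable {σ τ K : Type*} [Fintype σ] [Fintype τ] [DecidableEq K]

theorem sum_mul_comp_eq_sum_fiber {w : σ → ℝ} {f : σ → K} (φ : K → ℝ) {T : Finset K}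
    (hT : ∀ s, f s ∈ T) :
    ∑ s, w s * φ (f s) = ∑ k ∈ T, (∑ s with f s = k, w s) * φ k := by
  rw [← Finset.sum_fiberwise_of_maps_to (fun s _ => hT s)]
  refine Finset.sum_congr rfl fun k _ => ?_
  rw [Finset.sum_mul]
  refine Finset.sum_congr rfl fun s hs => ?_
  rw [(Finset.mem_filter.mp hs).2]

theorem sum_mul_comp_eq_of_sum_fiber_eq {w : σ → ℝ} {v : τ → ℝ} {f : σ → K} {g : τ → K}
    (hfib : ∀ k, ∑ s with f s = k, w s = ∑ t with g t = k, v t) (φ : K → ℝ) :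
    ∑ s, w s * φ (f s) = ∑ t, v t * φ (g t) := by
  let T := Finset.univ.image f ∪ Finset.univ.image g
  rw [sum_mul_comp_eq_sum_fiber φ (T := T) fun s => by simp [T],
    sum_mul_comp_eq_sum_fiber φ (T := T) fun t => by simp [T]]
  simp only [hfib]

/-- `p t` is the `w`-average of `q` over the `f`-fiber of `g t` (`0` on fibers of mass `0`). -/
theorem exists_sum_mul_comp_eq_of_sum_fiber_eq {w : σ → ℝ} {v : τ → ℝ} {f : σ → K} {g : τ → K}
    (hw : ∀ s, 0 ≤ w s) (hfib : ∀ k, ∑ s with f s = k, w s = ∑ t with g t = k, v t)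
    {q : σ → ℝ} (hq : ∀ s, q s ∈ Set.Icc (0 : ℝ) 1) :
    ∃ p : τ → ℝ, (∀ t, p t ∈ Set.Icc (0 : ℝ) 1) ∧
      ∀ φ : K → ℝ, ∑ s, q s * w s * φ (f s) = ∑ t, p t * v t * φ (g t) := by
  set N : K → ℝ := fun k => ∑ s with f s = k, q s * w s
  set M : K → ℝ := fun k => ∑ s with f s = k, w s
  have hN_nonneg k : 0 ≤ N k := Finset.sum_nonneg fun s _ => mul_nonneg (hq s).1 (hw s)
  have hN_le k : N k ≤ M k :=
    Finset.sum_le_sum fun s _ => mul_le_of_le_one_left (hw s) (hq s).2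
  refine ⟨fun t => N (g t) / M (g t), fun t => ⟨?_, ?_⟩, fun φ => ?_⟩
  · exact div_nonneg (hN_nonneg _) ((hN_nonneg _).trans (hN_le _))
  · exact div_le_one_of_le₀ (hN_le _) ((hN_nonneg _).trans (hN_le _))
  refine sum_mul_comp_eq_of_sum_fiber_eq (fun k => ?_) φ
  calc ∑ s with f s = k, q s * w s
      = N k / M k * M k :=
        (div_mul_cancel_of_imp fun h => le_antisymm (h ▸ hN_le k) (hN_nonneg k)).symm
    _ = N k / M k * ∑ t with g t = k, v t := congrArg _ (hfib k)
    _ = ∑ t with g t = k, N (g t) / M (g t) * v t := by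
        rw [Finset.mul_sum]
        refine Finset.sum_congr rfl fun t ht => ?_
        rw [(Finset.mem_filter.mp ht).2]

end FiberSums

section DetDynamics

variable (Td : S → A → S) (Od : S → O)

/-- Actions are listed newest first, as in `Hist`. -/
def detState (s0 : S) : List A → S
  | [] => s0
  | a :: as => Td (detState s0 as) a

def detTrace (s0 : S) : List A → List (A × O)
  | [] => []
  | a :: as => (a, Od (detState Td s0 (a :: as))) :: detTrace s0 as

def IsConsistent (s0 : S) (h : Hist A O) : Prop :=
  Od s0 = h.1 ∧ detTrace Td Od s0 (h.2.map Prod.fst) = h.2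

/-- The observations a state produces under every open-loop action sequence of length `m`;
consistency with a history of length `≤ m` depends on the state only through this. -/
def behaviour (m : ℕ) (s0 : S) (w : List.Vector A m) : Hist A O :=
  (Od s0, detTrace Td Od s0 w.toList)

variable {Td Od}

@[simp]
theorem map_fst_detTrace (s0 : S) (as : List A) : (detTrace Td Od s0 as).map Prod.fst = as := by
  induction as with
  | nil => rfl
  | cons a as ih => simp [detTrace, ih]

theorem length_behaviour {m : ℕ} (s0 : S) (w : List.Vector A m) :
    (behaviour Td Od m s0 w).2.length = m := by
  rw [behaviour, ← List.length_map Prod.fst, map_fst_detTrace, List.Vector.toList_length]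

theorem detTrace_suffix_detTrace_append (s0 : S) (as bs : List A) :
    detTrace Td Od s0 bs <:+ detTrace Td Od s0 (as ++ bs) := by
  induction as with
  | nil => exact List.suffix_refl _
  | cons a as ih => exact ih.trans (List.suffix_cons _ _)

theorem detTrace_map_fst_of_suffix (s0 : S) {l : List (A × O)} {as : List A}
    (hl : l <:+ detTrace Td Od s0 as) : detTrace Td Od s0 (l.map Prod.fst) = l := by
  induction as with
  | nil => rw [List.eq_nil_of_suffix_nil hl]; rfl
  | cons a as ih =>
    rcases List.suffix_cons_iff.mp hl with rfl | hl
    · simp only [List.map_cons, map_fst_detTrace]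
      rfl
    · exact ih hl

theorem isConsistent_nil (s0 : S) (o0 : O) : IsConsistent Td Od s0 (o0, []) ↔ Od s0 = o0 := by
  simp [IsConsistent, detTrace]

theorem isConsistent_cons (s0 : S) (o0 : O) (a : A) (o : O) (l : List (A × O)) :
    IsConsistent Td Od s0 (o0, (a, o) :: l) ↔
      IsConsistent Td Od s0 (o0, l) ∧ Od (Td (detState Td s0 (l.map Prod.fst)) a) = o := by
  simp only [IsConsistent, List.map_cons, detTrace, detState, List.cons.injEq, Prod.mk.injEq,
    true_and]
  tauto

theorem isConsistent_iff_exists_hPrefix_behaviour [Nonempty A] {m : ℕ} (s0 : S)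
    {h : Hist A O} (hl : h.2.length ≤ m) :
    IsConsistent Td Od s0 h ↔ ∃ w, HPrefix h (behaviour Td Od m s0 w) := by
  constructor
  · rintro ⟨h1, h2⟩
    let a0 : A := Classical.arbitrary A
    refine ⟨⟨List.replicate (m - h.2.length) a0 ++ h.2.map Prod.fst, by simp; omega⟩, h1.symm, ?_⟩
    have := detTrace_suffix_detTrace_append (Td := Td) (Od := Od) s0
      (List.replicate (m - h.2.length) a0) (h.2.map Prod.fst)
    rwa [h2] at this
  · rintro ⟨w, h1, h2⟩
    exact ⟨h1.symm, detTrace_map_fst_of_suffix s0 h2⟩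

theorem behaviour_eq_iff {S₀ : Type} {Td₀ : S₀ → A → S₀} {Od₀ : S₀ → O} {m : ℕ} (s : S)
    (s₀ : S₀) :
    behaviour Td Od m s = behaviour Td₀ Od₀ m s₀ ↔
      ∀ w, IsConsistent Td Od s (behaviour Td₀ Od₀ m s₀ w) := by
  constructor
  · intro h w
    rw [← h]
    exact ⟨rfl, by simp [behaviour]⟩
  · intro h
    funext w
    obtain ⟨h1, h2⟩ := h w
    simp only [behaviour, map_fst_detTrace] at h1 h2
    rw [behaviour, behaviour, h1, h2]

end DetDynamics

namespace Policy

variable [Fintype A]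

noncomputable def actionsProb (π : Policy A O) (o0 : O) : List (A × O) → ℝ
  | [] => 1
  | (a, _) :: l => actionsProb π o0 l * π.act (o0, l) a

noncomputable def uniform [Nonempty A] : Policy A O where
  act _ _ := (Fintype.card A : ℝ)⁻¹
  nonneg _ _ := by positivity
  sum_one _ := by simp

theorem actionsProb_uniform_pos [Nonempty A] (o0 : O) (l : List (A × O)) :
    0 < (uniform : Policy A O).actionsProb o0 l := by
  induction l with
  | nil => exact zero_lt_one
  | cons x l ih => exact mul_pos ih (by simp [uniform, Fintype.card_pos])

end Policy

theorem posterior_eq_zero_of_isEmpty [Fintype S] [Fintype A] [Fintype O] [IsEmpty A]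
    (μ : Env S A O) (h : Hist A O) (s : S) : posterior μ h s = 0 :=
  dif_neg fun ⟨π, _⟩ => by simpa using π.sum_one h

section DetEnv

variable [Fintype S] [Fintype A] [Fintype O]

theorem histStateProb_eq_sum_T0_mul (μ : Env S A O) (π : Policy A O) (o0 : O)
    (l : List (A × O)) (s : S) :
    histStateProb μ π o0 l s = ∑ s0, μ.T0 s0 * histStateProbFrom μ π s0 o0 l s := by
  induction l generalizing s with
  | nil => simp [histStateProb, histStateProbFrom]
  | cons x l ih =>
    simp only [histStateProb, histStateProbFrom, ih, Finset.sum_mul, Finset.mul_sum]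
    rw [Finset.sum_comm]
    exact Finset.sum_congr rfl fun _ _ => Finset.sum_congr rfl fun _ _ => by ring

theorem histProb_eq_sum_T0_mul (μ : Env S A O) (π : Policy A O) (h : Hist A O) :
    histProb μ π h = ∑ s0, μ.T0 s0 * histProbFrom μ π s0 h := by
  simp only [histProb, histProbFrom, histStateProb_eq_sum_T0_mul, Finset.mul_sum]
  exact Finset.sum_comm

structure Env.IsDetBy (μ : Env S A O) (Td : S → A → S) (Od : S → O) : Prop where
  T_eq : ∀ s a s', μ.T s a s' = if s' = Td s a then 1 else 0
  Obs_eq : ∀ s o, μ.Obs s o = if o = Od s then 1 else 0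

theorem IsDetEnv.exists_isDetBy {μ : Env S A O} (hμ : IsDetEnv μ) :
    ∃ Td Od, μ.IsDetBy Td Od :=
  ⟨_, _, fun s a => (hμ.1 s a).choose_spec, fun s => (hμ.2 s).choose_spec⟩

namespace Env.IsDetBy

variable {μ : Env S A O} {Td : S → A → S} {Od : S → O}

theorem histStateProbFrom_eq (hd : μ.IsDetBy Td Od) (π : Policy A O) (s0 : S) (o0 : O)
    (l : List (A × O)) (s : S) :
    histStateProbFrom μ π s0 o0 l s =
      if IsConsistent Td Od s0 (o0, l) ∧ s = detState Td s0 (l.map Prod.fst)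
      then π.actionsProb o0 l else 0 := by
  induction l generalizing s with
  | nil =>
    simp only [histStateProbFrom, hd.Obs_eq, isConsistent_nil, List.map_nil, detState,
      Policy.actionsProb]
    by_cases hs : s = s0 <;> simp [hs, eq_comm]
  | cons x l ih =>
    obtain ⟨a, o⟩ := x
    simp only [histStateProbFrom, ih, hd.T_eq, hd.Obs_eq, isConsistent_cons, List.map_cons,
      detState, Policy.actionsProb, ite_mul, zero_mul]
    by_cases hc : IsConsistent Td Od s0 (o0, l)
    · by_cases hs : s = Td (detState Td s0 (l.map Prod.fst)) a
      · subst hs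
        by_cases ho : o = Od (Td (detState Td s0 (l.map Prod.fst)) a) <;>
          simp [hc, ho, eq_comm, mul_comm]
      · simp [hs, hc]
    · simp [hc]

theorem histProbFrom_eq (hd : μ.IsDetBy Td Od) (π : Policy A O) (s0 : S) (h : Hist A O) :
    histProbFrom μ π s0 h = if IsConsistent Td Od s0 h then π.actionsProb h.1 h.2 else 0 := by
  by_cases hc : IsConsistent Td Od s0 h <;>
    simp [histProbFrom, hd.histStateProbFrom_eq, hc]

theorem histProb_eq (hd : μ.IsDetBy Td Od) (π : Policy A O) (h : Hist A O) :
    histProb μ π h = π.actionsProb h.1 h.2 * ∑ s with IsConsistent Td Od s h, μ.T0 s := by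
  simp [histProb_eq_sum_T0_mul, hd.histProbFrom_eq, Finset.sum_filter, Finset.mul_sum, mul_comm]

/-- Also valid when no policy gives `h` positive probability: then both sides are `0`, the
right one as `x / 0`. -/
theorem posterior_eq [Nonempty A] (hd : μ.IsDetBy Td Od) (h : Hist A O) (s : S) :
    posterior μ h s =
      (if IsConsistent Td Od s h then μ.T0 s else 0) / ∑ s with IsConsistent Td Od s h, μ.T0 s := by
  rw [posterior]
  by_cases hex : ∃ π : Policy A O, 0 < histProb μ π h
  · rw [dif_pos hex]
    have hπ := hex.choose_spec
    rw [hd.histProb_eq] at hπ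
    have hπ0 := left_ne_zero_of_mul hπ.ne'
    simp only [hd.histProbFrom_eq, mul_ite, mul_zero, ← Finset.sum_filter, ← Finset.sum_mul]
    rw [← ite_zero_mul, mul_div_mul_right _ _ hπ0]
  · have hmass : ∑ s with IsConsistent Td Od s h, μ.T0 s = 0 := by
      refine le_antisymm (not_lt.mp fun hpos => hex ⟨Policy.uniform, ?_⟩)
        (Finset.sum_nonneg fun s _ => μ.T0_nonneg s)
      rw [hd.histProb_eq]
      exact mul_pos (Policy.actionsProb_uniform_pos _ _) hpos
    rw [dif_neg hex, hmass, div_zero]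

end Env.IsDetBy

end DetEnv

def detEnvPol (Td : S → A → S) (Od : S → O) (m : ℕ) (s0 : S) : EnvPol S A O m :=
  (s0, fun s a _ => Td s a, fun s _ => Od s)

theorem epState_detEnvPol {Td : S → A → S} {Od : S → O} {m : ℕ} (s0 : S) {l : List (A × O)}
    (hl : l.length ≤ m) : epState (detEnvPol Td Od m s0) l = detState Td s0 (l.map Prod.fst) := by
  induction l with
  | nil => rfl
  | cons x l ih =>
    have hlt : l.length < m := by simpa using hl
    rw [epState, dif_pos hlt, ih hlt.le]
    rfl

theorem epHistProb_detEnvPol [Fintype A] {Td : S → A → S} {Od : S → O} {m : ℕ} (s0 : S)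
    (π : Policy A O) (o0 : O) {l : List (A × O)} (hl : l.length ≤ m) :
    epHistProb (detEnvPol Td Od m s0) π o0 l =
      if IsConsistent Td Od s0 (o0, l) then π.actionsProb o0 l else 0 := by
  induction l with
  | nil =>
    by_cases hc : Od s0 = o0 <;>
      simp [epHistProb, detEnvPol, isConsistent_nil, Policy.actionsProb, hc]
  | cons x l ih =>
    obtain ⟨a, o⟩ := x
    have hlt : l.length < m := by simpa using hl
    rw [epHistProb, dif_pos hlt, ih hlt.le, epState_detEnvPol s0 hlt.le]
    by_cases hc : IsConsistent Td Od s0 (o0, l) <;>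
      by_cases ho : Od (Td (detState Td s0 (l.map Prod.fst)) a) = o <;>
      simp [hc, ho, isConsistent_cons, detEnvPol, Policy.actionsProb]

namespace Env.IsDetBy

variable [Fintype S] [Fintype A] [Fintype O] {μ : Env S A O} {Td : S → A → S} {Od : S → O}

theorem envPolProb_detEnvPol (hd : μ.IsDetBy Td Od) (m : ℕ) (s0 : S) :
    envPolProb μ (detEnvPol Td Od m s0) = μ.T0 s0 := by
  simp [envPolProb, detEnvPol, hd.T_eq, hd.Obs_eq]

theorem envPolProb_eq_zero (hd : μ.IsDetBy Td Od) {m : ℕ} {ep : EnvPol S A O m}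
    (hep : ep ≠ detEnvPol Td Od m ep.1) : envPolProb μ ep = 0 := by
  obtain ⟨s0, Th, Oh⟩ := ep
  have hne : Th ≠ (fun s a _ => Td s a) ∨ Oh ≠ (fun s _ => Od s) := by
    by_contra! h
    exact hep (by rw [h.1, h.2]; rfl)
  simp only [envPolProb]
  rcases hne with hT | hO
  · obtain ⟨s, a, i, hi⟩ : ∃ s a i, Th s a i ≠ Td s a := by
      by_contra! h
      exact hT (funext fun s => funext fun a => funext (h s a))
    have h0 : ∏ s, ∏ a, ∏ i, μ.T s a (Th s a i) = 0 :=
      Finset.prod_eq_zero (Finset.mem_univ s) <| Finset.prod_eq_zero (Finset.mem_univ a) <|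
        Finset.prod_eq_zero (Finset.mem_univ i) (by simp [hd.T_eq, hi])
    simp [h0]
  · obtain ⟨s, i, hi⟩ : ∃ s i, Oh s i ≠ Od s := by
      by_contra! h
      exact hO (funext fun s => funext (h s))
    have h0 : ∏ s, ∏ i, μ.Obs s (Oh s i) = 0 :=
      Finset.prod_eq_zero (Finset.mem_univ s) <|
        Finset.prod_eq_zero (Finset.mem_univ i) (by simp [hd.Obs_eq, hi])
    simp [h0]

theorem sum_envPolProb_mul [DecidableEq S] [DecidableEq A] (hd : μ.IsDetBy Td Od) {m : ℕ}
    (G : EnvPol S A O m → ℝ) :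
    ∑ ep, envPolProb μ ep * G ep = ∑ s0, μ.T0 s0 * G (detEnvPol Td Od m s0) := by
  rw [Fintype.sum_prod_type]
  refine Finset.sum_congr rfl fun s0 _ => ?_
  rw [Fintype.sum_eq_single (detEnvPol Td Od m s0).2 fun x hx =>
    by rw [hd.envPolProb_eq_zero (fun h => hx (congrArg Prod.snd h)), zero_mul]]
  rw [← hd.envPolProb_detEnvPol m s0]
  rfl

theorem sum_mul_posterior_eq [Nonempty A] (hd : μ.IsDetBy Td Od) {m : ℕ} {h : Hist A O}
    (hl : h.2.length ≤ m) (q : S → ℝ) :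
    ∑ s, q s * posterior μ h s =
      (∑ s, q s * μ.T0 s * if ∃ w, HPrefix h (behaviour Td Od m s w) then 1 else 0) /
        ∑ s, μ.T0 s * if ∃ w, HPrefix h (behaviour Td Od m s w) then 1 else 0 := by
  simp only [hd.posterior_eq, ← isConsistent_iff_exists_hPrefix_behaviour _ hl, mul_div_assoc',
    ← Finset.sum_div, mul_ite, mul_one, mul_zero, Finset.sum_filter]

end Env.IsDetBy

namespace MCounterEquiv

variable [Fintype S] [DecidableEq S] [Fintype S'] [DecidableEq S'] [Fintype A] [DecidableEq A]
  [Fintype O] {μ : Env S A O} {μ' : Env S' A O} {m : ℕ}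

theorem symm (hce : MCounterEquiv μ μ' m) : MCounterEquiv μ' μ m :=
  fun n hs πs hl => (hce n hs πs hl).symm

theorem trans [Fintype S''] [DecidableEq S''] {μ'' : Env S'' A O} (hce : MCounterEquiv μ μ' m)
    (hce' : MCounterEquiv μ' μ'' m) : MCounterEquiv μ μ'' m :=
  fun n hs πs hl => (hce n hs πs hl).trans (hce' n hs πs hl)

variable {Td : S → A → S} {Od : S → O} {Td' : S' → A → S'} {Od' : S' → O}

theorem sum_T0_forall_isConsistent_eq [Nonempty A] (hce : MCounterEquiv μ μ' m)
    (hd : μ.IsDetBy Td Od) (hd' : μ'.IsDetBy Td' Od') {ι : Type*} [Fintype ι]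
    (H : ι → Hist A O) (hH : ∀ i, (H i).2.length ≤ m) :
    ∑ s with ∀ i, IsConsistent Td Od s (H i), μ.T0 s =
      ∑ s with ∀ i, IsConsistent Td' Od' s (H i), μ'.T0 s := by
  let e := Fintype.equivFin ι
  have key := hce _ (H ∘ e.symm) (fun _ => Policy.uniform) (fun i => hH (e.symm i))
  have hiff {T : Type} (C : T → Hist A O → Prop) (s : T) :
      (∀ i, C s (H (e.symm i))) ↔ ∀ i, C s (H i) :=
    e.symm.forall_congr_right (q := fun i => C s (H i))
  simp only [hd.sum_envPolProb_mul, hd'.sum_envPolProb_mul, Function.comp_apply,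
    epHistProb_detEnvPol _ _ _ (hH _), Finset.prod_ite_zero, Finset.mem_univ, true_implies,
    Prod.mk.eta, hiff, mul_ite, mul_zero, ← Finset.sum_filter,
    ← Finset.sum_mul] at key
  refine mul_right_cancel₀ (Finset.prod_pos fun i _ => ?_).ne' key
  exact Policy.actionsProb_uniform_pos _ _

theorem sum_T0_behaviour_eq [Nonempty A] (hce : MCounterEquiv μ μ' m) (hd : μ.IsDetBy Td Od)
    (hd' : μ'.IsDetBy Td' Od') (k : List.Vector A m → Hist A O) :
    ∑ s with behaviour Td Od m s = k, μ.T0 s = ∑ s with behaviour Td' Od' m s = k, μ'.T0 s := by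
  by_cases hk : (∃ s, behaviour Td Od m s = k) ∨ ∃ s, behaviour Td' Od' m s = k
  · obtain ⟨S₀, Td₀, Od₀, s₀, rfl⟩ : ∃ (S₀ : Type) (Td₀ : S₀ → A → S₀) (Od₀ : S₀ → O) (s₀ : S₀),
        behaviour Td₀ Od₀ m s₀ = k :=
      hk.elim (fun ⟨s, hs⟩ => ⟨S, Td, Od, s, hs⟩) fun ⟨s, hs⟩ => ⟨S', Td', Od', s, hs⟩
    simp only [behaviour_eq_iff]
    exact hce.sum_T0_forall_isConsistent_eq hd hd' _ fun w => (length_behaviour s₀ w).le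
  · push Not at hk
    rw [Finset.filter_false_of_mem fun s _ => hk.1 s, Finset.filter_false_of_mem fun s _ => hk.2 s,
      Finset.sum_empty, Finset.sum_empty]

theorem exists_sum_mul_posterior_eq (hce : MCounterEquiv μ μ' m) (hd : μ.IsDetBy Td Od)
    (hd' : μ'.IsDetBy Td' Od') {q : S → ℝ} (hq : ∀ s, q s ∈ Set.Icc (0 : ℝ) 1) :
    ∃ p : S' → ℝ, (∀ s, p s ∈ Set.Icc (0 : ℝ) 1) ∧
      ∀ h : Hist A O, h.2.length ≤ m →
        ∑ s, q s * posterior μ h s = ∑ s, p s * posterior μ' h s := by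
  cases isEmpty_or_nonempty A
  · exact ⟨0, fun _ => ⟨le_rfl, zero_le_one⟩, fun h _ => by simp [posterior_eq_zero_of_isEmpty]⟩
  have hfib := hce.sum_T0_behaviour_eq hd hd'
  obtain ⟨p, hp, hpush⟩ := exists_sum_mul_comp_eq_of_sum_fiber_eq μ.T0_nonneg hfib hq
  refine ⟨p, hp, fun h hl => ?_⟩
  have hnum := hpush fun β => if ∃ w, HPrefix h (β w) then 1 else 0
  have hden := sum_mul_comp_eq_of_sum_fiber_eq hfib fun β => if ∃ w, HPrefix h (β w) then 1 else 0
  rw [hd.sum_mul_posterior_eq hl, hd'.sum_mul_posterior_eq hl, hnum, hden]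

end MCounterEquiv

/-- **universality.** If `P` is a pure learning process on `μ` and `μ*` is
any deterministic environment `m`-counterfactually equivalent to `μ`, then there exist
constants `p_{s*} ∈ [0,1]` with `P(h) = ∑_{s*} p_{s*} μ*(s₀ = s* | h)` for all histories
of length `≤ m`: every deterministic `m`-counterfactually equivalent environment realizes
every pure learning process. -/
theorem pureLearning_universality
    {S Sstar A O : Type} [Fintype S] [DecidableEq S] [Fintype Sstar] [DecidableEq Sstar]
    [Fintype A] [DecidableEq A] [Fintype O]
    (μ : Env S A O) (m : ℕ) (P : Hist A O → ℝ)
    (hP : IsPureLearning μ m P)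
    (μstar : Env Sstar A O) (hdet : IsDetEnv μstar) (hce : MCounterEquiv μ μstar m) :
    ∃ p : Sstar → ℝ, (∀ sstar, p sstar ∈ Set.Icc (0 : ℝ) 1) ∧
      ∀ h : Hist A O, h.2.length ≤ m → P h = ∑ sstar, p sstar * posterior μstar h sstar := by
  obtain ⟨-, S', _, _, μ', p', hdet', hce', hp', hP⟩ := hP
  obtain ⟨Td', Od', hd'⟩ := hdet'.exists_isDetBy
  obtain ⟨Td, Od, hd⟩ := hdet.exists_isDetBy
  obtain ⟨p, hp, hsum⟩ := (hce'.symm.trans hce).exists_sum_mul_posterior_eq hd' hd hp'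
  exact ⟨p, hp, fun h hl => (hP h hl).trans (hsum h hl)⟩
end

section
/- For any environment μ, any m, any policy π, and any history h_t with t ≤ m, the unconditional history probability decomposes over deterministic environment policies: μ(h_t | π) = ∑_{π_μ ∈ Π_μ^m} μ(π_μ) · μ(h_t | π_μ, π). That is, the agent's interaction with μ for m turns can equivalently be modeled by first drawing a deterministic environment policy according to μ(·) and then following it. -/
open scoped Classical
open Finset
set_option maxHeartbeats 1000000

variable {S S' S'' A O : Type}

lemma sum_prod_pi {ι κ : Type} [Fintype ι] [DecidableEq ι] [Fintype κ]
    (w : ι → κ → ℝ) :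
    ∑ f : ι → κ, ∏ i, w i (f i) = ∏ i, ∑ b, w i b := by
  rw [Finset.prod_univ_sum, Fintype.piFinset_univ]

lemma collapse {S : Type} [Fintype S] [DecidableEq S] (c0 : S) (X : S → ℝ) :
    ∑ x : S, (if c0 = x then 1 else 0) * X x = X c0 := by
  simp [ite_mul]

lemma integrate_coord {ι κ : Type} [Fintype ι] [DecidableEq ι] [Fintype κ]
    (w : ι → κ → ℝ) (j : ι) (hj : ∑ b, w j b = 1)
    (G : κ → ℝ) (H : (ι → κ) → ℝ)
    (hH : ∀ f b, H (Function.update f j b) = H f) :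
    ∑ f : ι → κ, (∏ i, w i (f i)) * (G (f j) * H f)
      = (∑ b, w j b * G b) * ∑ f : ι → κ, (∏ i, w i (f i)) * H f := by
  have hsplit : ∀ f : ι → κ, (∏ i, w i (f i)) = w j (f j) * ∏ i ∈ Finset.univ.erase j, w i (f i) :=
    fun f => (Finset.mul_prod_erase _ _ (Finset.mem_univ j)).symm
  have hupd : ∀ (f : ι → κ) (b : κ),
      (∏ i, w i (Function.update f j b i)) = w j b * ∏ i ∈ Finset.univ.erase j, w i (f i) := by
    intro f b
    rw [hsplit]
    simp only [Function.update_self]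
    congr 1
    refine Finset.prod_congr rfl fun i hi => ?_
    rw [Function.update_of_ne (Finset.ne_of_mem_erase hi)]
  have key : ∀ f : ι → κ,
      ∑ b, (w j (f j) * G (f j)) *
        ((∏ i, w i (Function.update f j b i)) * H (Function.update f j b))
        = (∏ i, w i (f i)) * (G (f j) * H f) := by
    intro f
    have h1 : ∀ b : κ, (w j (f j) * G (f j)) *
        ((∏ i, w i (Function.update f j b i)) * H (Function.update f j b))
        = w j b * ((w j (f j) * ∏ i ∈ Finset.univ.erase j, w i (f i)) * (G (f j) * H f)) := by
      intro b; rw [hupd, hH]; ring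
    rw [Finset.sum_congr rfl fun b _ => h1 b, ← Finset.sum_mul, hj, one_mul, ← hsplit]
  have hΦ : Function.Involutive
      (fun p : (ι → κ) × κ => (Function.update p.1 j p.2, p.1 j)) := by
    intro p
    simp [Function.update_idem, Function.update_eq_self, Function.update_self]
  calc ∑ f : ι → κ, (∏ i, w i (f i)) * (G (f j) * H f)
      = ∑ f : ι → κ, ∑ b, (w j (f j) * G (f j)) *
          ((∏ i, w i (Function.update f j b i)) * H (Function.update f j b)) :=
        Finset.sum_congr rfl fun f _ => (key f).symm
    _ = ∑ p : (ι → κ) × κ, (w j (p.1 j) * G (p.1 j)) *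
          ((∏ i, w i (Function.update p.1 j p.2 i)) * H (Function.update p.1 j p.2)) :=
        (Fintype.sum_prod_type (f := fun p : (ι → κ) × κ => (w j (p.1 j) * G (p.1 j)) *
          ((∏ i, w i (Function.update p.1 j p.2 i)) * H (Function.update p.1 j p.2)))).symm
    _ = ∑ p : (ι → κ) × κ, (w j p.2 * G p.2) * ((∏ i, w i (p.1 i)) * H p.1) :=
        Fintype.sum_bijective _ hΦ.bijective _ _ (fun p => rfl)
    _ = ∑ f : ι → κ, ∑ b, (w j b * G b) * ((∏ i, w i (f i)) * H f) :=
        Fintype.sum_prod_type (f := fun p : (ι → κ) × κ =>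
          (w j p.2 * G p.2) * ((∏ i, w i (p.1 i)) * H p.1))
    _ = (∑ b, w j b * G b) * ∑ f : ι → κ, (∏ i, w i (f i)) * H f := by
        rw [Finset.sum_comm]
        simp only [← Finset.mul_sum]
        rw [← Finset.sum_mul]


section MyAux

variable {S A O : Type} [Fintype S] [DecidableEq S] [Fintype A] [DecidableEq A] [Fintype O]


def e3equiv (α β γ κ : Type) : (α × β × γ → κ) ≃ (α → β → γ → κ) where
  toFun g a b c := g (a, b, c)
  invFun f p := f p.1 p.2.1 p.2.2
  left_inv g := rfl
  right_inv f := rfl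

lemma integrate_O {m : ℕ} (μ : Env S A O) (s' : S) (k1 : Fin (m + 1)) (o : O)
    (H : (S → Fin (m + 1) → O) → ℝ)
    (hH : ∀ f f' : S → Fin (m + 1) → O,
      (∀ p q, (p, q) ≠ (s', k1) → f p q = f' p q) → H f = H f') :
    ∑ OO : S → Fin (m + 1) → O,
        (∏ s, ∏ i, μ.Obs s (OO s i)) * ((if OO s' k1 = o then 1 else 0) * H OO)
      = μ.Obs s' o *
          ∑ OO : S → Fin (m + 1) → O, (∏ s, ∏ i, μ.Obs s (OO s i)) * H OO := by
  have hbij : Function.Bijective (fun (g : S × Fin (m+1) → O) (s : S) (i : Fin (m+1)) => g (s, i)) :=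
    (Equiv.curry S (Fin (m+1)) O).bijective
  have h1 : ∀ F : (S → Fin (m+1) → O) → ℝ,
      ∑ f : S → Fin (m+1) → O, F f = ∑ g : S × Fin (m+1) → O, F (fun s i => g (s, i)) :=
    fun F => (Fintype.sum_bijective _ hbij (fun g => F (fun s i => g (s, i))) F (fun g => rfl)).symm
  have h2 : ∀ g : S × Fin (m+1) → O,
      (∏ s, ∏ i, μ.Obs s (g (s, i))) = ∏ p : S × Fin (m+1), μ.Obs p.1 (g p) :=
    fun g => (Fintype.prod_prod_type (f := fun p : S × Fin (m+1) => μ.Obs p.1 (g p))).symm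
  rw [h1 (fun OO => (∏ s, ∏ i, μ.Obs s (OO s i)) * ((if OO s' k1 = o then 1 else 0) * H OO)),
      h1 (fun OO => (∏ s, ∏ i, μ.Obs s (OO s i)) * H OO)]
  simp only [h2]
  calc ∑ g : S × Fin (m+1) → O,
        (∏ p : S × Fin (m+1), μ.Obs p.1 (g p)) *
          ((if g (s', k1) = o then 1 else 0) * H (fun s i => g (s, i)))
      = (∑ b, μ.Obs s' b * (if b = o then 1 else 0)) *
          ∑ g : S × Fin (m+1) → O, (∏ p : S × Fin (m+1), μ.Obs p.1 (g p)) * H (fun s i => g (s, i)) :=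
        integrate_coord (fun p b => μ.Obs p.1 b) (s', k1) (μ.Obs_sum s')
          (fun b => if b = o then 1 else 0) (fun g => H (fun s i => g (s, i)))
          (fun g b => hH _ _ fun p q hpq => Function.update_of_ne hpq b g)
    _ = μ.Obs s' o *
          ∑ g : S × Fin (m+1) → O, (∏ p : S × Fin (m+1), μ.Obs p.1 (g p)) * H (fun s i => g (s, i)) := by
        rw [show (∑ b, μ.Obs s' b * (if b = o then 1 else 0)) = μ.Obs s' o by simp]

lemma integrate_T {m : ℕ} (μ : Env S A O) (s0 : S) (a0 : A) (kk : Fin m) (s' : S)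
    (H : (S → A → Fin m → S) → ℝ)
    (hH : ∀ f f' : S → A → Fin m → S,
      (∀ p q r, (p, q, r) ≠ (s0, a0, kk) → f p q r = f' p q r) → H f = H f') :
    ∑ TT : S → A → Fin m → S,
        (∏ s, ∏ a, ∏ i, μ.T s a (TT s a i)) * ((if TT s0 a0 kk = s' then 1 else 0) * H TT)
      = μ.T s0 a0 s' *
          ∑ TT : S → A → Fin m → S, (∏ s, ∏ a, ∏ i, μ.T s a (TT s a i)) * H TT := by
  have hbij : Function.Bijective
      (fun (g : S × A × Fin m → S) (s : S) (a : A) (i : Fin m) => g (s, a, i)) :=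
    (e3equiv S A (Fin m) S).bijective
  have h1 : ∀ F : (S → A → Fin m → S) → ℝ,
      ∑ f : S → A → Fin m → S, F f = ∑ g : S × A × Fin m → S, F (fun s a i => g (s, a, i)) :=
    fun F => (Fintype.sum_bijective _ hbij (fun g => F (fun s a i => g (s, a, i))) F
      (fun g => rfl)).symm
  have h2 : ∀ g : S × A × Fin m → S,
      (∏ s, ∏ a, ∏ i, μ.T s a (g (s, a, i))) = ∏ p : S × A × Fin m, μ.T p.1 p.2.1 (g p) := by
    intro g
    rw [Fintype.prod_prod_type (f := fun p : S × A × Fin m => μ.T p.1 p.2.1 (g p))]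
    exact Finset.prod_congr rfl fun s _ =>
      (Fintype.prod_prod_type (f := fun q : A × Fin m => μ.T s q.1 (g (s, q.1, q.2)))).symm
  rw [h1 (fun TT => (∏ s, ∏ a, ∏ i, μ.T s a (TT s a i)) * ((if TT s0 a0 kk = s' then 1 else 0) * H TT)),
      h1 (fun TT => (∏ s, ∏ a, ∏ i, μ.T s a (TT s a i)) * H TT)]
  simp only [h2]
  calc ∑ g : S × A × Fin m → S,
        (∏ p : S × A × Fin m, μ.T p.1 p.2.1 (g p)) *
          ((if g (s0, a0, kk) = s' then 1 else 0) * H (fun s a i => g (s, a, i)))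
      = (∑ b, μ.T s0 a0 b * (if b = s' then 1 else 0)) *
          ∑ g : S × A × Fin m → S, (∏ p : S × A × Fin m, μ.T p.1 p.2.1 (g p)) *
            H (fun s a i => g (s, a, i)) :=
        integrate_coord (fun p b => μ.T p.1 p.2.1 b) (s0, a0, kk) (μ.T_sum s0 a0)
          (fun b => if b = s' then 1 else 0) (fun g => H (fun s a i => g (s, a, i)))
          (fun g b => hH _ _ fun p q r hpq => Function.update_of_ne hpq b g)
    _ = μ.T s0 a0 s' *
          ∑ g : S × A × Fin m → S, (∏ p : S × A × Fin m, μ.T p.1 p.2.1 (g p)) *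
            H (fun s a i => g (s, a, i)) := by
        rw [show (∑ b, μ.T s0 a0 b * (if b = s' then 1 else 0)) = μ.T s0 a0 s' by simp]

lemma sum_prod_T {m : ℕ} (μ : Env S A O) :
    ∑ TT : S → A → Fin m → S, ∏ s, ∏ a, ∏ i, μ.T s a (TT s a i) = 1 := by
  rw [sum_prod_pi (w := fun s (g : A → Fin m → S) => ∏ a, ∏ i, μ.T s a (g a i))]
  rw [Finset.prod_congr rfl fun s _ =>
    sum_prod_pi (w := fun a (g : Fin m → S) => ∏ i, μ.T s a (g i))]
  rw [Finset.prod_congr rfl fun s _ => Finset.prod_congr rfl fun a _ =>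
    sum_prod_pi (w := fun (i : Fin m) (b : S) => μ.T s a b)]
  simp [μ.T_sum]

lemma sum_prod_O {m : ℕ} (μ : Env S A O) :
    ∑ OO : S → Fin (m + 1) → O, ∏ s, ∏ i, μ.Obs s (OO s i) = 1 := by
  rw [sum_prod_pi (w := fun s (g : Fin (m+1) → O) => ∏ i, μ.Obs s (g i))]
  rw [Finset.prod_congr rfl fun s _ =>
    sum_prod_pi (w := fun (i : Fin (m+1)) (b : O) => μ.Obs s b)]
  simp [μ.Obs_sum]


lemma epState_congr {m : ℕ} (t0 : S) (T1 T2 : S → A → Fin m → S)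
    (O1 O2 : S → Fin (m + 1) → O) (l : List (A × O))
    (hT : ∀ s a (i : Fin m), (i : ℕ) < l.length → T1 s a i = T2 s a i) :
    epState ((t0, T1, O1) : EnvPol S A O m) l = epState ((t0, T2, O2) : EnvPol S A O m) l := by
  induction l with
  | nil => rfl
  | cons hd tl ih =>
    obtain ⟨a, o⟩ := hd
    simp only [epState]
    have ih' := ih (fun s a i hi => hT s a i (by simp only [List.length_cons]; omega))
    by_cases h : tl.length < m
    · rw [dif_pos h, dif_pos h, ih', hT _ _ _ (by simp only [List.length_cons]; omega)]
    · rw [dif_neg h, dif_neg h, ih']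

lemma epHistProb_congr {m : ℕ} (π : Policy A O) (o0 : O) (t0 : S)
    (T1 T2 : S → A → Fin m → S) (O1 O2 : S → Fin (m + 1) → O) (l : List (A × O))
    (hT : ∀ s a (i : Fin m), (i : ℕ) < l.length → T1 s a i = T2 s a i)
    (hO : ∀ s (i : Fin (m + 1)), (i : ℕ) ≤ l.length → O1 s i = O2 s i) :
    epHistProb ((t0, T1, O1) : EnvPol S A O m) π o0 l
      = epHistProb ((t0, T2, O2) : EnvPol S A O m) π o0 l := by
  induction l with
  | nil =>
    simp only [epHistProb]
    simp only [hO t0 0 (by simp)]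
  | cons hd tl ih =>
    obtain ⟨a, o⟩ := hd
    simp only [epHistProb]
    rw [ih (fun s a i hi => hT s a i (by simp only [List.length_cons]; omega))
        (fun s i hi => hO s i (by simp only [List.length_cons]; omega))]
    by_cases h : tl.length < m
    · rw [dif_pos h, dif_pos h,
        epState_congr t0 T1 T2 O1 O2 tl
          (fun s a i hi => hT s a i (by simp only [List.length_cons]; omega))]
      simp only [hT _ _ _ (show ((⟨tl.length, h⟩ : Fin m) : ℕ) < (tl.length + 1) by simp)]
      simp only [hO _ _ (show ((⟨tl.length + 1, by omega⟩ : Fin (m+1)) : ℕ) ≤ (tl.length + 1) by simp)]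
    · rw [dif_neg h, dif_neg h]

lemma collapse2 {S : Type} [Fintype S] [DecidableEq S] (c0 : S) (tv : S → S) (X : S → S → ℝ) :
    ∑ s : S, ∑ s' : S, (if c0 = s then 1 else 0) * ((if tv s = s' then 1 else 0) * X s s')
      = X c0 (tv c0) := by
  have h1 : ∀ s : S, ∑ s' : S, (if c0 = s then 1 else 0) * ((if tv s = s' then 1 else 0) * X s s')
      = (if c0 = s then 1 else 0) * X s (tv s) := by
    intro s
    rw [← Finset.mul_sum, collapse]
  rw [Finset.sum_congr rfl fun s _ => h1 s, collapse]

lemma reorder4 {α β γ δ : Type} [Fintype α] [Fintype β] [Fintype γ] [Fintype δ]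
    (F : α → β → γ → δ → ℝ) :
    ∑ x : α, ∑ y : β, ∑ z : γ, ∑ u : δ, F x y z u
      = ∑ x : α, ∑ u : δ, ∑ y : β, ∑ z : γ, F x y z u := by
  refine Finset.sum_congr rfl fun x _ => ?_
  calc ∑ y : β, ∑ z : γ, ∑ u : δ, F x y z u
      = ∑ y : β, ∑ u : δ, ∑ z : γ, F x y z u :=
        Finset.sum_congr rfl fun y _ => Finset.sum_comm
    _ = ∑ u : δ, ∑ y : β, ∑ z : γ, F x y z u := Finset.sum_comm

lemma reorder5 {α β γ δ ε : Type} [Fintype α] [Fintype β] [Fintype γ] [Fintype δ] [Fintype ε]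
    (F : α → β → γ → δ → ε → ℝ) :
    ∑ x : α, ∑ y : β, ∑ z : γ, ∑ u : δ, ∑ v : ε, F x y z u v
      = ∑ x : α, ∑ u : δ, ∑ v : ε, ∑ y : β, ∑ z : γ, F x y z u v := by
  refine Finset.sum_congr rfl fun x _ => ?_
  calc ∑ y : β, ∑ z : γ, ∑ u : δ, ∑ v : ε, F x y z u v
      = ∑ y : β, ∑ u : δ, ∑ z : γ, ∑ v : ε, F x y z u v :=
        Finset.sum_congr rfl fun y _ => Finset.sum_comm
    _ = ∑ u : δ, ∑ y : β, ∑ z : γ, ∑ v : ε, F x y z u v := Finset.sum_comm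
    _ = ∑ u : δ, ∑ y : β, ∑ v : ε, ∑ z : γ, F x y z u v :=
        Finset.sum_congr rfl fun u _ => Finset.sum_congr rfl fun y _ => Finset.sum_comm
    _ = ∑ u : δ, ∑ v : ε, ∑ y : β, ∑ z : γ, F x y z u v :=
        Finset.sum_congr rfl fun u _ => Finset.sum_comm

lemma pull3 {α : Type} [Fintype α] (P X : α → ℝ) (c1 c2 : ℝ) :
    ∑ x : α, P x * (c1 * (c2 * X x)) = (c1 * c2) * ∑ x : α, P x * X x := by
  rw [Finset.mul_sum]
  exact Finset.sum_congr rfl fun x _ => by ring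

lemma pull4 {α : Type} [Fintype α] (T Ob gg : α → ℝ) (c t0 K : ℝ) :
    ∑ x : α, T x * ((t0 * (c * gg x) * Ob x) * K)
      = (c * ∑ x : α, T x * (Ob x * gg x)) * (t0 * K) := by
  calc ∑ x : α, T x * ((t0 * (c * gg x) * Ob x) * K)
      = ∑ x : α, (T x * (Ob x * gg x)) * (c * (t0 * K)) :=
        Finset.sum_congr rfl fun x _ => by ring
    _ = (∑ x : α, T x * (Ob x * gg x)) * (c * (t0 * K)) := (Finset.sum_mul ..).symm
    _ = (c * ∑ x : α, T x * (Ob x * gg x)) * (t0 * K) := by ring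

lemma main_sum (μ : Env S A O) (m : ℕ) (π : Policy A O) (o0 : O) :
    ∀ l : List (A × O), l.length ≤ m → ∀ g : S → ℝ,
      ∑ ep : EnvPol S A O m, envPolProb μ ep * (epHistProb ep π o0 l * g (epState ep l))
        = ∑ s, histStateProb μ π o0 l s * g s := by
  intro l
  induction l with
  | nil =>
    intro _ g
    simp only [Fintype.sum_prod_type, envPolProb, epHistProb, epState, histStateProb]
    refine Finset.sum_congr rfl fun t0 _ => ?_
    trans (∑ TT : S → A → Fin m → S, (∏ s, ∏ a, ∏ i, μ.T s a (TT s a i)) *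
        ∑ OO : S → Fin (m+1) → O, (∏ s, ∏ i, μ.Obs s (OO s i)) *
          ((if OO t0 0 = o0 then 1 else 0) * (μ.T0 t0 * g t0)))
    · refine Finset.sum_congr rfl fun TT _ => ?_
      rw [Finset.mul_sum]
      exact Finset.sum_congr rfl fun OO _ => by ring
    · trans (∑ TT : S → A → Fin m → S, (∏ s, ∏ a, ∏ i, μ.T s a (TT s a i)) *
          (μ.Obs t0 o0 * ∑ OO : S → Fin (m+1) → O, (∏ s, ∏ i, μ.Obs s (OO s i)) *
            (μ.T0 t0 * g t0)))
      · exact Finset.sum_congr rfl fun TT _ => by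
          rw [integrate_O μ t0 0 o0 (fun _ => μ.T0 t0 * g t0) (fun f f' _ => rfl)]
      · rw [← Finset.sum_mul, sum_prod_T, one_mul, ← Finset.sum_mul, sum_prod_O, one_mul]
        ring
  | cons hd tl ih =>
    obtain ⟨a, o⟩ := hd
    intro hlen g
    have hk : tl.length < m := by simpa using hlen
    have htl : tl.length ≤ m := le_of_lt hk
    simp only [Fintype.sum_prod_type, envPolProb, epHistProb, epState, histStateProb, dif_pos hk]
    trans (∑ t0 : S, ∑ TT : S → A → Fin m → S, ∑ OO : S → Fin (m + 1) → O, ∑ s : S, ∑ s' : S,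
      (∏ s'' : S, ∏ a'' : A, ∏ i : Fin m, μ.T s'' a'' (TT s'' a'' i)) *
        ((if TT s a ⟨tl.length, hk⟩ = s' then 1 else 0) *
          (μ.T0 t0 * (π.act (o0, tl) a * g s') *
            ((∏ s'' : S, ∏ i : Fin (m + 1), μ.Obs s'' (OO s'' i)) *
              ((if OO s' ⟨tl.length + 1, by omega⟩ = o then 1 else 0) *
                ((if epState (t0, TT, OO) tl = s then 1 else 0) *
                  epHistProb (t0, TT, OO) π o0 tl))))))
    · refine Finset.sum_congr rfl fun t0 _ => Finset.sum_congr rfl fun TT _ =>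
        Finset.sum_congr rfl fun OO _ => ?_
      refine Eq.symm ?_
      trans (∑ s : S, ∑ s' : S,
        (if epState (t0, TT, OO) tl = s then 1 else 0) *
          ((if TT s a ⟨tl.length, hk⟩ = s' then 1 else 0) *
            ((∏ s'' : S, ∏ a'' : A, ∏ i : Fin m, μ.T s'' a'' (TT s'' a'' i)) *
              (μ.T0 t0 * (π.act (o0, tl) a * g s') *
                ((∏ s'' : S, ∏ i : Fin (m + 1), μ.Obs s'' (OO s'' i)) *
                  ((if OO s' ⟨tl.length + 1, by omega⟩ = o then 1 else 0) *
                    epHistProb (t0, TT, OO) π o0 tl))))))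
      · exact Finset.sum_congr rfl fun s _ => Finset.sum_congr rfl fun s' _ => by ring
      · rw [collapse2]
        ring
    rw [reorder5]
    trans (∑ t0 : S, ∑ s : S, ∑ s' : S, ∑ TT : S → A → Fin m → S,
      (∏ s'' : S, ∏ a'' : A, ∏ i : Fin m, μ.T s'' a'' (TT s'' a'' i)) *
        ((if TT s a ⟨tl.length, hk⟩ = s' then 1 else 0) *
          (μ.T0 t0 * (π.act (o0, tl) a * g s') *
            (μ.Obs s' o *
              ∑ OO : S → Fin (m + 1) → O, (∏ s'' : S, ∏ i : Fin (m + 1), μ.Obs s'' (OO s'' i)) *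
                ((if epState (t0, TT, OO) tl = s then 1 else 0) *
                  epHistProb (t0, TT, OO) π o0 tl)))))
    · refine Finset.sum_congr rfl fun t0 _ => Finset.sum_congr rfl fun s _ =>
        Finset.sum_congr rfl fun s' _ => Finset.sum_congr rfl fun TT _ => ?_
      simp only [← Finset.mul_sum]
      rw [integrate_O μ s' ⟨tl.length + 1, by omega⟩ o
        (fun OO => (if epState (t0, TT, OO) tl = s then 1 else 0) * epHistProb (t0, TT, OO) π o0 tl)
        (fun f f' hff => by
          have hO' : ∀ (p : S) (q : Fin (m + 1)), (q : ℕ) ≤ tl.length → f p q = f' p q := by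
            intro p q hq
            refine hff p q (fun hc => ?_)
            rw [Prod.mk.injEq] at hc
            obtain ⟨-, h3⟩ := hc
            rw [h3] at hq
            simp at hq
          simp only [epState_congr t0 TT TT f f' tl (fun _ _ _ _ => rfl),
            epHistProb_congr π o0 t0 TT TT f f' tl (fun _ _ _ _ => rfl) hO'])]
    trans (∑ t0 : S, ∑ s : S, ∑ s' : S,
      μ.T s a s' *
        ∑ TT : S → A → Fin m → S,
          (∏ s'' : S, ∏ a'' : A, ∏ i : Fin m, μ.T s'' a'' (TT s'' a'' i)) *
            (μ.T0 t0 * (π.act (o0, tl) a * g s') *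
              (μ.Obs s' o *
                ∑ OO : S → Fin (m + 1) → O, (∏ s'' : S, ∏ i : Fin (m + 1), μ.Obs s'' (OO s'' i)) *
                  ((if epState (t0, TT, OO) tl = s then 1 else 0) *
                    epHistProb (t0, TT, OO) π o0 tl))))
    · refine Finset.sum_congr rfl fun t0 _ => Finset.sum_congr rfl fun s _ =>
        Finset.sum_congr rfl fun s' _ => ?_
      refine integrate_T μ s a ⟨tl.length, hk⟩ s'
        (fun TT => μ.T0 t0 * (π.act (o0, tl) a * g s') *
          (μ.Obs s' o *
            ∑ OO : S → Fin (m + 1) → O, (∏ s'' : S, ∏ i : Fin (m + 1), μ.Obs s'' (OO s'' i)) *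
              ((if epState (t0, TT, OO) tl = s then 1 else 0) * epHistProb (t0, TT, OO) π o0 tl)))
        (fun f f' hff => ?_)
      have hT' : ∀ (p : S) (q : A) (r : Fin m), (r : ℕ) < tl.length → f p q r = f' p q r := by
        intro p q r hr
        refine hff p q r (fun hc => ?_)
        rw [Prod.mk.injEq, Prod.mk.injEq] at hc
        obtain ⟨-, -, h3⟩ := hc
        rw [h3] at hr
        simp at hr
      simp only [show ∀ OO : S → Fin (m + 1) → O,
          epState (t0, f, OO) tl = epState (t0, f', OO) tl from
          fun OO => epState_congr t0 f f' OO OO tl hT',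
        show ∀ OO : S → Fin (m + 1) → O,
          epHistProb (t0, f, OO) π o0 tl = epHistProb (t0, f', OO) π o0 tl from
          fun OO => epHistProb_congr π o0 t0 f f' OO OO tl hT' (fun _ _ _ => rfl)]
    trans (∑ t0 : S, ∑ s : S,
      (π.act (o0, tl) a * ∑ s' : S, μ.T s a s' * (μ.Obs s' o * g s')) *
        (μ.T0 t0 *
          ∑ TT : S → A → Fin m → S,
            (∏ s'' : S, ∏ a'' : A, ∏ i : Fin m, μ.T s'' a'' (TT s'' a'' i)) *
              ∑ OO : S → Fin (m + 1) → O, (∏ s'' : S, ∏ i : Fin (m + 1), μ.Obs s'' (OO s'' i)) *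
                ((if epState (t0, TT, OO) tl = s then 1 else 0) *
                  epHistProb (t0, TT, OO) π o0 tl)))
    · refine Finset.sum_congr rfl fun t0 _ => Finset.sum_congr rfl fun s _ => ?_
      trans (∑ s' : S, μ.T s a s' *
        ((μ.T0 t0 * (π.act (o0, tl) a * g s') * μ.Obs s' o) *
          ∑ TT : S → A → Fin m → S,
            (∏ s'' : S, ∏ a'' : A, ∏ i : Fin m, μ.T s'' a'' (TT s'' a'' i)) *
              ∑ OO : S → Fin (m + 1) → O, (∏ s'' : S, ∏ i : Fin (m + 1), μ.Obs s'' (OO s'' i)) *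
                ((if epState (t0, TT, OO) tl = s then 1 else 0) *
                  epHistProb (t0, TT, OO) π o0 tl)))
      · exact Finset.sum_congr rfl fun s' _ => by rw [pull3]
      · rw [pull4]
    have hfold : (∑ t0 : S, ∑ s : S,
        (π.act (o0, tl) a * ∑ s' : S, μ.T s a s' * (μ.Obs s' o * g s')) *
          (μ.T0 t0 *
            ∑ TT : S → A → Fin m → S,
              (∏ s'' : S, ∏ a'' : A, ∏ i : Fin m, μ.T s'' a'' (TT s'' a'' i)) *
                ∑ OO : S → Fin (m + 1) → O, (∏ s'' : S, ∏ i : Fin (m + 1), μ.Obs s'' (OO s'' i)) *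
                  ((if epState (t0, TT, OO) tl = s then 1 else 0) *
                    epHistProb (t0, TT, OO) π o0 tl)))
        = ∑ ep : EnvPol S A O m, envPolProb μ ep *
            (epHistProb ep π o0 tl *
              (π.act (o0, tl) a * ∑ s' : S, μ.T (epState ep tl) a s' * (μ.Obs s' o * g s'))) := by
      refine Eq.symm ?_
      simp only [Fintype.sum_prod_type, envPolProb]
      trans (∑ t0 : S, ∑ TT : S → A → Fin m → S, ∑ OO : S → Fin (m + 1) → O, ∑ s : S,
        (π.act (o0, tl) a * ∑ s' : S, μ.T s a s' * (μ.Obs s' o * g s')) *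
          (μ.T0 t0 *
            ((∏ s'' : S, ∏ a'' : A, ∏ i : Fin m, μ.T s'' a'' (TT s'' a'' i)) *
              ((∏ s'' : S, ∏ i : Fin (m + 1), μ.Obs s'' (OO s'' i)) *
                ((if epState (t0, TT, OO) tl = s then 1 else 0) *
                  epHistProb (t0, TT, OO) π o0 tl)))))
      · refine Finset.sum_congr rfl fun t0 _ => Finset.sum_congr rfl fun TT _ =>
          Finset.sum_congr rfl fun OO _ => ?_
        refine Eq.symm ?_
        trans (∑ s : S, (if epState (t0, TT, OO) tl = s then 1 else 0) *
          ((π.act (o0, tl) a * ∑ s' : S, μ.T s a s' * (μ.Obs s' o * g s')) *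
            (μ.T0 t0 *
              ((∏ s'' : S, ∏ a'' : A, ∏ i : Fin m, μ.T s'' a'' (TT s'' a'' i)) *
                ((∏ s'' : S, ∏ i : Fin (m + 1), μ.Obs s'' (OO s'' i)) *
                  epHistProb (t0, TT, OO) π o0 tl)))))
        · exact Finset.sum_congr rfl fun s _ => by ring
        · rw [collapse]
          ring
      · rw [reorder4]
        refine Finset.sum_congr rfl fun t0 _ => Finset.sum_congr rfl fun s _ => ?_
        simp only [← Finset.mul_sum]
    rw [hfold]
    refine Eq.trans (ih htl
      (fun s0 : S => π.act (o0, tl) a * ∑ s' : S, μ.T s0 a s' * (μ.Obs s' o * g s'))) ?_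
    show ∑ s0 : S, histStateProb μ π o0 tl s0 *
        (π.act (o0, tl) a * ∑ s' : S, μ.T s0 a s' * (μ.Obs s' o * g s')) = _
    trans (∑ s0 : S, ∑ s' : S,
      (histStateProb μ π o0 tl s0 * μ.T s0 a s') * ((π.act (o0, tl) a * μ.Obs s' o) * g s'))
    · refine Finset.sum_congr rfl fun s0 _ => ?_
      simp only [Finset.mul_sum]
      exact Finset.sum_congr rfl fun s' _ => by ring
    · rw [Finset.sum_comm]
      refine Finset.sum_congr rfl fun s' _ => ?_
      rw [← Finset.sum_mul]
      ring

end MyAux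

/-- The unconditional history probability decomposes over deterministic
environment policies: `μ(h | π) = ∑_{π_μ ∈ Π_μ^m} μ(π_μ) · μ(h | π_μ, π)` for any history
of length `t ≤ m`. -/
theorem histProb_eq_sum_envPol
    {S A O : Type} [Fintype S] [DecidableEq S] [Fintype A] [DecidableEq A] [Fintype O]
    (μ : Env S A O) (m : ℕ) (π : Policy A O) (h : Hist A O) (hlen : h.2.length ≤ m) :
    histProb μ π h
      = ∑ ep : EnvPol S A O m, envPolProb μ ep * epHistProb ep π h.1 h.2 := by
  have h2 := main_sum μ m π h.1 h.2 hlen (fun _ => 1)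
  simp only [mul_one] at h2
  simp only [histProb]
  exact h2.symm
end

section
/- Let μ be an environment and m ≥ 0, and let μ* be the environment with S* = S × Π_μ^m × {0,…,m}, the same A and Ω, deterministic observation function O*(s, π_μ, i) = Ô(s,i), deterministic transition function T*((s, π_μ, i), a) = (T̂(s,a,i), π_μ, i+1) (where π_μ = (T̂₀, T̂, Ô)), and initial distribution T₀*(s, π_μ, i) = μ(π_μ) if s = T̂₀ and i = 0, and 0 otherwise. Let Q* ⊂ Π^m_{μ*} be the set of environment policies of μ* of the form ((T̂₀, π_μ, 0), T*, O*), and let f : Q* → Π_μ^m be the bijection sending such an element to π_μ. Then μ*(π_{μ*}) = 0 for every π_{μ*} ∉ Q*, and μ*(π_{μ*}) = μ(f(π_{μ*})) for every π_{μ*} ∈ Q*. -/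
open scoped Classical
open Finset

variable {S S' S'' A O : Type}

/-- The deterministic transition function `T*` of the underlying deterministic environment:
`T*((s, π_μ, i), a) = (T̂(s, a, i+1), π_μ, i+1)` (in the paper's `{1,…,m}`-indexing, the
transition out of the turn-`i` state uses the turn-`(i+1)` component of `T̂`). -/
def Tstar {S A O : Type} (m : ℕ) :
    S × EnvPol S A O m × Fin (m + 1) → A → S × EnvPol S A O m × Fin (m + 1) :=
  fun x a =>
    if h : (x.2.2 : Fin (m + 1)).val < m then
      (x.2.1.2.1 x.1 a ⟨x.2.2.val, h⟩, x.2.1, ⟨x.2.2.val + 1, by omega⟩)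
    else x

/-- The deterministic observation function `O*` of the underlying deterministic
environment: `O*(s, π_μ, i) = Ô(s, i)`. -/
def Ostar {S A O : Type} (m : ℕ) : S × EnvPol S A O m × Fin (m + 1) → O :=
  fun x => x.2.1.2.2 x.1 x.2.2

/-- The map sending an environment policy `π_μ = (T̂₀, T̂, Ô)` of `μ` to the environment
policy `((T̂₀, π_μ, 0), T*, O*)` of `μ*` (with the time-independent deterministic kernels
`T*`, `O*` regarded as environment-policy components by ignoring the time index).
`Q*` is the image of this map, and `f` is its inverse. -/
def liftEP {S A O : Type} (m : ℕ) (ep : EnvPol S A O m) :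
    EnvPol (S × EnvPol S A O m × Fin (m + 1)) A O m :=
  ((ep.1, ep, 0), fun x a _ => Tstar m x a, fun x _ => Ostar m x)

/-- Let `μ*` be the environment with state space
`S* = S × Π_μ^m × {0,…,m}`, deterministic observation kernel `O*(s,π_μ,i) = Ô(s,i)`,
deterministic transition kernel `T*((s,π_μ,i),a) = (T̂(s,a,i+1), π_μ, i+1)`, and initial
distribution `T₀*(s,π_μ,i) = μ(π_μ)` if `s = T̂₀` and `i = 0`, else `0`. Let
`Q* ⊆ Π^m_{μ*}` be the image of `liftEP` and `f : Q* → Π_μ^m` the corresponding map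
(a bijection, since `liftEP` is injective). Then `μ*(π_{μ*}) = 0` for `π_{μ*} ∉ Q*`,
and `μ*(π_{μ*}) = μ(f(π_{μ*}))` for `π_{μ*} ∈ Q*`. -/
theorem envPolProb_underlying_deterministic
    {S A O : Type} [Fintype S] [DecidableEq S] [Fintype A] [DecidableEq A]
    [Fintype O] [DecidableEq O]
    (μ : Env S A O) (m : ℕ)
    (μstar : Env (S × EnvPol S A O m × Fin (m + 1)) A O)
    (hT : ∀ x a y, μstar.T x a y = if y = Tstar m x a then 1 else 0)
    (hO : ∀ x o, μstar.Obs x o = if o = Ostar m x then 1 else 0)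
    (hT0 : ∀ x : S × EnvPol S A O m × Fin (m + 1),
      μstar.T0 x = if x.1 = x.2.1.1 ∧ x.2.2 = 0 then envPolProb μ x.2.1 else 0) :
    Function.Injective (liftEP (S := S) (A := A) (O := O) m) ∧
    (∀ epstar : EnvPol (S × EnvPol S A O m × Fin (m + 1)) A O m,
      (¬ ∃ ep : EnvPol S A O m, epstar = liftEP m ep) → envPolProb μstar epstar = 0) ∧
    (∀ ep : EnvPol S A O m, envPolProb μstar (liftEP m ep) = envPolProb μ ep) := by
  refine ⟨?_, ?_, ?_⟩
  · intro a b hab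
    have := congrArg (fun x => x.1.2.1) hab
    simpa [liftEP] using this
  · intro epstar hne
    by_contra h0
    simp only [envPolProb, mul_ne_zero_iff, Finset.prod_ne_zero_iff, Finset.mem_univ,
      forall_true_left] at h0
    obtain ⟨h1, h2, h3⟩ := h0
    rw [hT0] at h1
    split_ifs at h1 with hc
    · obtain ⟨hc1, hc2⟩ := hc
      apply hne
      refine ⟨epstar.1.2.1, ?_⟩
      have hTeq : ∀ x a i, epstar.2.1 x a i = Tstar m x a := by
        intro x a i
        have := h2 x a i
        rw [hT] at this
        by_contra hne'
        simp [hne'] at this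
      have hOeq : ∀ x i, epstar.2.2 x i = Ostar m x := by
        intro x i
        have := h3 x i
        rw [hO] at this
        by_contra hne'
        simp [hne'] at this
      refine Prod.ext ?_ (Prod.ext ?_ ?_)
      · refine Prod.ext hc1 (Prod.ext rfl hc2)
      · funext x a i
        exact hTeq x a i
      · funext x i
        exact hOeq x i
    · exact h1 rfl
  · intro ep
    simp [envPolProb, liftEP, hT0, hT, hO]
end

section
/- Let μ be an environment, m ≥ 0, and let μ* be the environment with S* = S × Π_μ^m × {0,…,m}, the same A and Ω, O*(s, π_μ, i) = Ô(s,i), T*((s, π_μ, i), a) = (T̂(s,a,i), π_μ, i+1), and T₀*(s, π_μ, i) = μ(π_μ) if s = T̂₀ and i = 0, else 0. Let Q* ⊂ Π^m_{μ*} be the environment policies of μ* of the form ((T̂₀, π_μ, 0), T*, O*) and f : Q* → Π_μ^m the bijection sending such an element to π_μ. Then for every history h_t with t ≤ m, every policy π, and every π_{μ*} ∈ Q*: μ*(h_t | π_{μ*}, π) = μ(h_t | f(π_{μ*}), π). -/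
open scoped Classical
open Finset

variable {S S' S'' A O : Type}

lemma epState_liftEP {S A O : Type} (m : ℕ) (ep : EnvPol S A O m)
    (l : List (A × O)) (hl : l.length ≤ m) :
    epState (liftEP m ep) l = (epState ep l, ep, ⟨l.length, by omega⟩) := by
  induction l with
  | nil => rfl
  | cons x rest ih =>
    obtain ⟨a, o⟩ := x
    have hr : rest.length < m := by simpa using hl
    simp only [epState, dif_pos hr, ih hr.le]
    simp [liftEP, Tstar, hr]

/-- For the underlying deterministic environment `μ*` built on
`S* = S × Π_μ^m × {0,…,m}` with kernels `T*`, `O*`: for every history `h` of length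
`t ≤ m`, every policy `π` and every `π_{μ*} = liftEP m ep ∈ Q*`,
`μ*(h | π_{μ*}, π) = μ(h | f(π_{μ*}), π)`. -/
theorem epHistProb_liftEP
    {S A O : Type} [Fintype S] [DecidableEq S] [Fintype A] [DecidableEq A] [Fintype O]
    (m : ℕ) (ep : EnvPol S A O m) (π : Policy A O)
    (h : Hist A O) (hlen : h.2.length ≤ m) :
    epHistProb (liftEP m ep) π h.1 h.2 = epHistProb ep π h.1 h.2 := by
  obtain ⟨o0, l⟩ := h
  simp only at hlen ⊢
  induction l with
  | nil => rfl
  | cons x rest ih =>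
    obtain ⟨a, o⟩ := x
    have hr : rest.length < m := by simpa using hlen
    simp only [epHistProb, ih hr.le, dif_pos hr, epState_liftEP m ep rest hr.le]
    simp [liftEP, Ostar, Tstar, hr]
end

section
/- Let μ and μ* be deterministic environments that are m-counterfactually equivalent, with history maps f_s : Π₀ → H_m for s ∈ S and f_{s*} : Π₀ → H_m for s* ∈ S*, fibers F(f) = {s ∈ S : f_s = f} and F*(f) = {s* ∈ S* : f_{s*} = f}, and constants p_s ∈ [0,1] for s ∈ S. Define, for each s* ∈ F*(f_s) with T₀*(s*) ≠ 0 and ∑_{s'∈F(f_s)} T₀(s') > 0, p_{s*} = (∑_{s'∈F(f_s)} T₀(s') p_{s'}) / (∑_{s'∈F(f_s)} T₀(s')). Then for every s ∈ S: ∑_{s*∈F*(f_s)} T₀*(s*) p_{s*} = ∑_{s'∈F(f_s)} T₀(s') p_{s'}. -/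
open scoped Classical
open Finset

variable {S S' S'' A O : Type}

/-!
In a deterministic environment the only environment policies of positive weight are the
canonical ones `(s₀, Td, Od)`, one per initial state `s₀`, and along the canonical policy from `s₀`
a deterministic policy `p` produces the history `f_{s₀}(p)` with probability one. Finitely many
deterministic policies `p_i` separate the fibers of both environments, so counterfactual
equivalence applied to the histories `f_s(p_i)` gives `∑_{F(f_s)} T₀ = ∑_{F*(f_s)} T₀*`.
As `p_{s*}` is the weighted average on the support of `T₀*` in `F*(f_s)`, the left-hand side is this
common mass times that average; if the mass vanishes, both sides do.
-/

section GeneratedHistory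

variable (Td : S → A → S) (Od : S → O) (p : Hist A O → A) (s0 : S)

lemma genHistAux_length (t : ℕ) : (genHistAux Td Od p s0 t).1.length = t := by
  induction t with
  | zero => rfl
  | succ t ih => simp [genHistAux, ih]

lemma genHist_cons_eq_iff (o0 : O) (a : A) (o : O) (l : List (A × O)) :
    (o0, (a, o) :: l) = genHist Td Od p s0 (l.length + 1) ↔
      (o0, l) = genHist Td Od p s0 l.length ∧ a = p (o0, l) ∧
        o = Od (Td (genHistAux Td Od p s0 l.length).2 a) := by
  simp only [genHist, genHistAux, Prod.mk.injEq, List.cons.injEq]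
  constructor
  · rintro ⟨rfl, ⟨rfl, rfl⟩, hl⟩
    rw [← hl]
    exact ⟨⟨rfl, rfl⟩, rfl, rfl⟩
  · rintro ⟨⟨rfl, hl⟩, rfl, rfl⟩
    rw [← hl]
    exact ⟨rfl, ⟨rfl, rfl⟩, rfl⟩

end GeneratedHistory

def canonEp (Td : S → A → S) (Od : S → O) (m : ℕ) (s0 : S) : EnvPol S A O m :=
  (s0, fun s a _ => Td s a, fun s _ => Od s)

noncomputable def detPolicy [Fintype A] (p : Hist A O → A) : Policy A O where
  act h a := if a = p h then 1 else 0
  nonneg h a := by split <;> norm_num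
  sum_one h := by simp

section CanonicalEnvPolicy

variable (Td : S → A → S) (Od : S → O) (m : ℕ) (p : Hist A O → A) (s0 : S) (o0 : O)

lemma epState_canonEp {l : List (A × O)} (hl : l.length ≤ m)
    (hgen : (o0, l) = genHist Td Od p s0 l.length) :
    epState (canonEp Td Od m s0) l = (genHistAux Td Od p s0 l.length).2 := by
  induction l with
  | nil => rfl
  | cons ao rest ih =>
    obtain ⟨a, o⟩ := ao
    obtain ⟨hrest, ha, -⟩ := (genHist_cons_eq_iff Td Od p s0 o0 a o rest).1 hgen
    have hrl : rest.length < m := by simpa using hl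
    simp only [epState, dif_pos hrl, ih hrl.le hrest, List.length_cons, genHistAux, ha]
    rw [hrest]
    rfl

lemma epHistProb_canonEp_detPolicy [Fintype A] {l : List (A × O)} (hl : l.length ≤ m) :
    epHistProb (canonEp Td Od m s0) (detPolicy p) o0 l
      = if (o0, l) = genHist Td Od p s0 l.length then 1 else 0 := by
  induction l with
  | nil =>
    simp only [epHistProb, genHist, genHistAux, canonEp, List.length_nil, Prod.mk.injEq,
      and_true, eq_comm]
  | cons ao rest ih =>
    obtain ⟨a, o⟩ := ao
    have hrl : rest.length < m := by simpa using hl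
    simp only [epHistProb, dif_pos hrl, ih hrl.le, List.length_cons, genHist_cons_eq_iff]
    by_cases hrest : (o0, rest) = genHist Td Od p s0 rest.length
    · rw [epState_canonEp Td Od m p s0 o0 hrl.le hrest]
      simp only [hrest, detPolicy, canonEp, if_true, one_mul, true_and, ite_zero_mul_ite_zero,
        mul_one, eq_comm]
    · simp [hrest]

end CanonicalEnvPolicy

section DeterministicEnv

variable [Fintype S] [DecidableEq S] [Fintype A] [Fintype O]
  {μ : Env S A O} {Td : S → A → S} {Od : S → O}

lemma envPolProb_of_det (hT : ∀ s a s', μ.T s a s' = if s' = Td s a then 1 else 0)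
    (hO : ∀ s o, μ.Obs s o = if o = Od s then 1 else 0) {m : ℕ} (ep : EnvPol S A O m) :
    envPolProb μ ep = if ep.2 = (canonEp Td Od m ep.1).2 then μ.T0 ep.1 else 0 := by
  simp only [envPolProb, hT, hO, Fintype.prod_boole, canonEp, Prod.ext_iff, funext_iff]
  split_ifs with h <;> simp_all [Finset.prod_eq_zero_iff]
  by_contra! hc
  obtain ⟨s, i, hi⟩ := h hc.2.1
  exact hi (hc.2.2 s i)

lemma sum_envPolProb_mul_of_det [DecidableEq A]
    (hT : ∀ s a s', μ.T s a s' = if s' = Td s a then 1 else 0)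
    (hO : ∀ s o, μ.Obs s o = if o = Od s then 1 else 0) (m : ℕ) (F : EnvPol S A O m → ℝ) :
    ∑ ep, envPolProb μ ep * F ep = ∑ s0, μ.T0 s0 * F (canonEp Td Od m s0) := by
  simp only [envPolProb_of_det hT hO, Fintype.sum_prod_type, ite_mul, zero_mul,
    Finset.sum_ite_eq', Finset.mem_univ, if_true]
  rfl

lemma sum_envPolProb_mul_prod_epHistProb_of_det [DecidableEq A]
    (hT : ∀ s a s', μ.T s a s' = if s' = Td s a then 1 else 0)
    (hO : ∀ s o, μ.Obs s o = if o = Od s then 1 else 0) {m n : ℕ}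
    (q : Fin n → Hist A O → A) (h : Fin n → Hist A O) (hlen : ∀ i, (h i).2.length = m) :
    ∑ ep : EnvPol S A O m, envPolProb μ ep * ∏ i, epHistProb ep (detPolicy (q i)) (h i).1 (h i).2
      = ∑ s0 ∈ univ.filter (fun s0 => ∀ i, genHist Td Od (q i) s0 m = h i), μ.T0 s0 := by
  rw [sum_envPolProb_mul_of_det hT hO, Finset.sum_filter]
  refine Finset.sum_congr rfl fun s0 _ => ?_
  simp only [epHistProb_canonEp_detPolicy _ _ _ _ _ _ (hlen _).le, hlen, Prod.mk.eta,
    Fintype.prod_boole, mul_ite, mul_one, mul_zero, eq_comm]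

end DeterministicEnv

lemma exists_fin_family_forall_iff {X P : Type*} [Finite X] (R : X → P → Prop) :
    ∃ (n : ℕ) (q : Fin n → P), ∀ x, (∀ i, R x (q i)) ↔ ∀ p, R x p := by
  have hwit : ∀ y : {x // ¬∀ p, R x p}, ∃ p, ¬R y p := fun y => not_forall.1 y.2
  choose w hw using hwit
  refine ⟨Nat.card {x // ¬∀ p, R x p}, w ∘ (Finite.equivFin _).symm, fun x => ⟨fun hx => ?_,
    fun hx i => hx _⟩⟩
  by_contra hnot
  have := hx (Finite.equivFin _ ⟨x, hnot⟩)
  rw [Function.comp_apply, Equiv.symm_apply_apply] at this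
  exact hw ⟨x, hnot⟩ this

lemma sum_T0_fiber_eq_of_mCounterEquiv [Fintype S] [DecidableEq S] [Fintype S'] [DecidableEq S']
    [Fintype S''] [Fintype A] [DecidableEq A] [Fintype O]
    {μ : Env S A O} {μ' : Env S' A O} {m : ℕ} (hce : MCounterEquiv μ μ' m)
    {Td : S → A → S} {Od : S → O}
    (hT : ∀ s a s', μ.T s a s' = if s' = Td s a then 1 else 0)
    (hO : ∀ s o, μ.Obs s o = if o = Od s then 1 else 0)
    {Td' : S' → A → S'} {Od' : S' → O}
    (hT' : ∀ s a s', μ'.T s a s' = if s' = Td' s a then 1 else 0)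
    (hO' : ∀ s o, μ'.Obs s o = if o = Od' s then 1 else 0)
    (Td'' : S'' → A → S'') (Od'' : S'' → O) (s : S'') :
    ∑ s0 ∈ fiber Td Od Td'' Od'' m s, μ.T0 s0 = ∑ s0 ∈ fiber Td' Od' Td'' Od'' m s, μ'.T0 s0 := by
  obtain ⟨n, q, hq⟩ := exists_fin_family_forall_iff fun (x : S ⊕ S') p =>
    Sum.elim (genHist Td Od p · m) (genHist Td' Od' p · m) x = genHist Td'' Od'' p s m
  have hlen : ∀ i, (genHist Td'' Od'' (q i) s m).2.length = m := fun i =>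
    genHistAux_length _ _ _ _ _
  have key := hce n _ (fun i => detPolicy (q i)) fun i => (hlen i).le
  rw [sum_envPolProb_mul_prod_epHistProb_of_det hT hO q _ hlen,
    sum_envPolProb_mul_prod_epHistProb_of_det hT' hO' q _ hlen] at key
  convert key using 2
  · exact Finset.filter_congr fun s0 _ => (hq (.inl s0)).symm
  · exact Finset.filter_congr fun s0 _ => (hq (.inr s0)).symm

lemma sum_mul_eq_zero_of_sum_eq_zero {ι : Type*} {s : Finset ι} {w f : ι → ℝ}
    (hw : ∀ i ∈ s, 0 ≤ w i) (hsum : ∑ i ∈ s, w i = 0) : ∑ i ∈ s, w i * f i = 0 :=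
  Finset.sum_eq_zero fun i hi => by rw [(Finset.sum_eq_zero_iff_of_nonneg hw).1 hsum i hi, zero_mul]

theorem fiber_weighted_average_general
    {S Sstar A O : Type} [Fintype S] [DecidableEq S] [Fintype Sstar] [DecidableEq Sstar]
    [Fintype A] [DecidableEq A] [Fintype O]
    (μ : Env S A O) (μstar : Env Sstar A O) (m : ℕ)
    (Td : S → A → S) (Od : S → O)
    (hT : ∀ s a s', μ.T s a s' = if s' = Td s a then 1 else 0)
    (hO : ∀ s o, μ.Obs s o = if o = Od s then 1 else 0)
    (Tds : Sstar → A → Sstar) (Ods : Sstar → O)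
    (hTs : ∀ s a s', μstar.T s a s' = if s' = Tds s a then 1 else 0)
    (hOs : ∀ s o, μstar.Obs s o = if o = Ods s then 1 else 0)
    (hce : MCounterEquiv μ μstar m)
    (pc : S → ℝ)
    (pstar : Sstar → ℝ)
    (hpstar : ∀ (s : S) (sstar : Sstar),
      sstar ∈ fiber Tds Ods Td Od m s →
      μstar.T0 sstar ≠ 0 →
      0 < ∑ s' ∈ fiber Td Od Td Od m s, μ.T0 s' →
      pstar sstar
        = (∑ s' ∈ fiber Td Od Td Od m s, μ.T0 s' * pc s')
            / ∑ s' ∈ fiber Td Od Td Od m s, μ.T0 s') :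
    ∀ s : S,
      ∑ sstar ∈ fiber Tds Ods Td Od m s, μstar.T0 sstar * pstar sstar
        = ∑ s' ∈ fiber Td Od Td Od m s, μ.T0 s' * pc s' := by
  intro s
  have hmass := sum_T0_fiber_eq_of_mCounterEquiv hce hT hO hTs hOs Td Od s
  set M := ∑ s' ∈ fiber Td Od Td Od m s, μ.T0 s'
  set c := ∑ s' ∈ fiber Td Od Td Od m s, μ.T0 s' * pc s'
  rcases (Finset.sum_nonneg fun s' _ => μ.T0_nonneg s' : 0 ≤ M).lt_or_eq with hpos | hzero
  · calc ∑ sstar ∈ fiber Tds Ods Td Od m s, μstar.T0 sstar * pstar sstar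
          = ∑ sstar ∈ fiber Tds Ods Td Od m s, μstar.T0 sstar * (c / M) := by
            refine Finset.sum_congr rfl fun sstar hmem => ?_
            rcases eq_or_ne (μstar.T0 sstar) 0 with h0 | h0
            · rw [h0, zero_mul, zero_mul]
            · rw [hpstar s sstar hmem h0 hpos]
      _ = c := by rw [← Finset.sum_mul, ← hmass, mul_div_cancel₀ _ hpos.ne']
  · rw [sum_mul_eq_zero_of_sum_eq_zero (fun _ _ => μstar.T0_nonneg _) (hmass ▸ hzero.symm)]
    exact (sum_mul_eq_zero_of_sum_eq_zero (fun _ _ => μ.T0_nonneg _) hzero.symm).symm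

/-- Let `μ` and `μ*` be deterministic environments (kernels the point
masses of `(Td, Od)` and `(Tds, Ods)`) that are `m`-counterfactually equivalent, with
fibers `F(f_s)` and `F*(f_s)` of the generated-history maps, and constants `p_s ∈ [0,1]`.
If `p_{s*}` is defined, for `s* ∈ F*(f_s)` with `T₀*(s*) ≠ 0` and
`∑_{s'∈F(f_s)} T₀(s') > 0`, as the weighted average
`(∑_{s'∈F(f_s)} T₀(s') p_{s'}) / (∑_{s'∈F(f_s)} T₀(s'))`, then for every `s ∈ S`,
`∑_{s*∈F*(f_s)} T₀*(s*) p_{s*} = ∑_{s'∈F(f_s)} T₀(s') p_{s'}`. -/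
theorem fiber_weighted_average
    {S Sstar A O : Type} [Fintype S] [DecidableEq S] [Fintype Sstar] [DecidableEq Sstar]
    [Fintype A] [DecidableEq A] [Fintype O]
    (μ : Env S A O) (μstar : Env Sstar A O) (m : ℕ)
    (Td : S → A → S) (Od : S → O)
    (hT : ∀ s a s', μ.T s a s' = if s' = Td s a then 1 else 0)
    (hO : ∀ s o, μ.Obs s o = if o = Od s then 1 else 0)
    (Tds : Sstar → A → Sstar) (Ods : Sstar → O)
    (hTs : ∀ s a s', μstar.T s a s' = if s' = Tds s a then 1 else 0)
    (hOs : ∀ s o, μstar.Obs s o = if o = Ods s then 1 else 0)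
    (hce : MCounterEquiv μ μstar m)
    (pc : S → ℝ) (hpc : ∀ s, pc s ∈ Set.Icc (0 : ℝ) 1)
    (pstar : Sstar → ℝ)
    (hpstar : ∀ (s : S) (sstar : Sstar),
      sstar ∈ fiber Tds Ods Td Od m s →
      μstar.T0 sstar ≠ 0 →
      0 < ∑ s' ∈ fiber Td Od Td Od m s, μ.T0 s' →
      pstar sstar
        = (∑ s' ∈ fiber Td Od Td Od m s, μ.T0 s' * pc s')
            / ∑ s' ∈ fiber Td Od Td Od m s, μ.T0 s') :
    ∀ s : S,
      ∑ sstar ∈ fiber Tds Ods Td Od m s, μstar.T0 sstar * pstar sstar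
        = ∑ s' ∈ fiber Td Od Td Od m s, μ.T0 s' * pc s' :=
  fiber_weighted_average_general μ μstar m Td Od hT hO Tds Ods hTs hOs hce pc pstar hpstar
end
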